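/- arXiv:2603.15201 — 6 statements merged into one kernel-verified Lean document; each statement's English description precedes it below -/
import Mathlib

section
/- Let λ > -μ_0 be a real number. Given κ ∈ ℝ, φ1, φ2, φ3 ∈ L^1(0,∞) and y1, y2 ∈ ℝ, define ψ1(a) = κ·exp(-∫_0^a (μ_h(s)+λ)ds) + ∫_0^a φ1(s)·exp(-∫_s^a (μ_h(τ)+λ)dτ)ds, ψ2(a) = ∫_0^a φ2(s)·exp(-∫_s^a (μ_h(τ)+δ(τ)+r_1(τ)+λ)dτ)ds, ψ3(a) = ∫_0^a φ3(s)·exp(-∫_s^a (μ_h(τ)+r_2(τ)+λ)dτ)ds, x1 = y1/(λ+μ_v) and x2 = y2/(λ+μ_v). Then ψ1, ψ2, ψ3 ∈ L^1(0,∞) and ‖ψ1‖_{L^1} + ‖ψ2‖_{L^1} + ‖ψ3‖_{L^1} + |x1| + |x2| ≤ (|κ| + ‖φ1‖_{L^1} + ‖φ2‖_{L^1} + ‖φ3‖_{L^1} + |y1| + |y2|)/(λ+μ_0). Moreover, if κ ≥ 0, φ1, φ2, φ3 ≥ 0 a.e. and y1, y2 ≥ 0, then ψ1, ψ2, ψ3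 ≥ 0 a.e. and x1, x2 ≥ 0. -/
/-!
With `c = λ + μ₀ > 0`, each `ψᵢ` is a variation-of-constants solution `ψ' = -g ψ + φ`,
`ψ 0 = κ`, with a rate `g ≥ c`. Hence `|ψ a| ≤ |κ| e^{-ca} + ∫₀^a |φ s| e^{-c(a-s)} ds`, i.e.
`|ψ|` is dominated by `|κ| k + |φ| ⋆ k` with `k = 𝟙_{t ≥ 0} e^{-ct}`, and by Fubini the
integral of a convolution is the product of the integrals, here `(|κ| + ‖φ‖₁) / c`.
Measurability of `ψ` comes from the factorisation
`ψ a = e^{-G a} (κ + ∫₀^a e^{G s} φ s ds)`, `G a = ∫₀^a g`, which is continuous in `a`.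
-/

open MeasureTheory Real Set
open scoped Convolution

section

noncomputable def expKernel (c : ℝ) : ℝ → ℝ := (Ici 0).indicator fun t => exp (-c * t)

variable {c : ℝ}

lemma expKernel_nonneg (t : ℝ) : 0 ≤ expKernel c t :=
  indicator_nonneg (fun _ _ => (exp_pos _).le) t

lemma integrable_expKernel (hc : 0 < c) : Integrable (expKernel c) :=
  (integrable_indicator_iff measurableSet_Ici).2 <|
    (integrableOn_Ici_iff_integrableOn_Ioi).2 (exp_neg_integrableOn_Ioi 0 hc)

lemma integral_expKernel (hc : 0 < c) : ∫ t, expKernel c t = c⁻¹ := by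
  rw [expKernel, integral_indicator measurableSet_Ici, integral_Ici_eq_integral_Ioi,
    integral_exp_mul_Ioi (neg_neg_of_pos hc)]
  simp

lemma convolution_expKernel_apply (f : ℝ → ℝ) (a : ℝ) :
    ((Ioi 0).indicator f ⋆ expKernel c) a = ∫ s in Ioc 0 a, f s * exp (-c * (a - s)) := by
  rw [convolution_def, ← integral_indicator measurableSet_Ioc]
  congr 1 with s
  simp only [expKernel, indicator_apply, mem_Ioi, mem_Ici, mem_Ioc, sub_nonneg,
    ContinuousLinearMap.lsmul_apply, smul_eq_mul]
  split_ifs <;> simp_all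

lemma integral_convolution_expKernel (hc : 0 < c) {f : ℝ → ℝ} (hf : Integrable f) :
    ∫ a, (f ⋆ expKernel c) a = c⁻¹ * ∫ s, f s := by
  rw [integral_convolution _ hf (integrable_expKernel hc), integral_expKernel hc]
  simp [mul_comm]

-- Variation of constants: the solution of `ψ' = -g ψ + φ`, `ψ 0 = κ`.
noncomputable def duhamel (g : ℝ → ℝ) (κ : ℝ) (φ : ℝ → ℝ) (a : ℝ) : ℝ :=
  κ * exp (-∫ s in (0 : ℝ)..a, g s) + ∫ s in (0 : ℝ)..a, φ s * exp (-∫ τ in s..a, g τ)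

noncomputable def duhamelMajorant (c κ : ℝ) (φ : ℝ → ℝ) (a : ℝ) : ℝ :=
  |κ| * expKernel c a + ((Ioi 0).indicator (fun s => |φ s|) ⋆ expKernel c) a

variable {g φ : ℝ → ℝ} {κ : ℝ}

lemma duhamel_nonneg (hκ : 0 ≤ κ) (hφ : ∀ᵐ s ∂volume.restrict (Ioi 0), 0 ≤ φ s) :
    ∀ᵐ a ∂volume.restrict (Ioi 0), 0 ≤ duhamel g κ φ a := by
  refine ae_restrict_of_forall_mem measurableSet_Ioi fun a ha => ?_
  refine add_nonneg (mul_nonneg hκ (exp_pos _).le) ?_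
  rw [intervalIntegral.integral_of_le ha.le]
  refine integral_nonneg_of_ae ?_
  filter_upwards [ae_restrict_of_ae_restrict_of_subset Ioc_subset_Ioi_self hφ] with s hs
  exact mul_nonneg hs (exp_pos _).le

lemma exp_neg_integral_le (hg : ∀ u v, IntervalIntegrable g volume u v) (hgc : ∀ a, c ≤ g a)
    {s a : ℝ} (hsa : s ≤ a) : exp (-∫ τ in s..a, g τ) ≤ exp (-c * (a - s)) := by
  have h : ∫ _ in s..a, c ≤ ∫ τ in s..a, g τ :=
    intervalIntegral.integral_mono_on hsa intervalIntegrable_const (hg s a) fun τ _ => hgc τ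
  rw [intervalIntegral.integral_const, smul_eq_mul] at h
  exact exp_le_exp.2 (by linarith)

lemma duhamel_eq_exp_neg_mul (hg : ∀ u v, IntervalIntegrable g volume u v) {a : ℝ}
    (ha : 0 ≤ a) :
    duhamel g κ φ a = exp (-∫ s in (0 : ℝ)..a, g s) *
      (κ + ∫ s in (0 : ℝ)..a, exp (∫ τ in (0 : ℝ)..s, g τ) * (Ioi 0).indicator φ s) := by
  rw [duhamel, mul_add, mul_comm, ← intervalIntegral.integral_const_mul]
  congr 1
  refine intervalIntegral.integral_congr_ae (Filter.Eventually.of_forall fun s hs => ?_)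
  rw [uIoc_of_le ha] at hs
  rw [indicator_of_mem (mem_Ioi.2 hs.1), ← intervalIntegral.integral_interval_sub_left (hg 0 a)
    (hg 0 s), neg_sub, sub_eq_add_neg, exp_add]
  ring

lemma continuousOn_duhamel (hg : ∀ u v, IntervalIntegrable g volume u v)
    (hφ : IntegrableOn φ (Ioi 0)) : ContinuousOn (duhamel g κ φ) (Ici 0) := by
  have hG : Continuous fun a => ∫ s in (0 : ℝ)..a, g s :=
    intervalIntegral.continuous_primitive hg 0
  have hH : Continuous fun a =>
      ∫ s in (0 : ℝ)..a, exp (∫ τ in (0 : ℝ)..s, g τ) * (Ioi 0).indicator φ s := by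
    refine intervalIntegral.continuous_primitive (fun u v => ?_) 0
    exact (intervalIntegrable_iff.2 <| IntegrableOn.continuousOn_mul_of_subset
      (continuous_exp.comp hG).continuousOn
      ((integrable_indicator_iff measurableSet_Ioi).2 hφ).integrableOn
      isCompact_uIcc measurableSet_uIoc Ioc_subset_Icc_self)
  refine ((continuous_exp.comp hG.neg).mul (continuous_const.add hH)).continuousOn.congr
    fun a ha => duhamel_eq_exp_neg_mul hg ha

lemma integrable_duhamelMajorant (hc : 0 < c) (hφ : IntegrableOn φ (Ioi 0)) :
    Integrable (duhamelMajorant c κ φ) :=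
  ((integrable_expKernel hc).const_mul _).add <|
    ((integrable_indicator_iff measurableSet_Ioi).2 hφ.abs).integrable_convolution _
      (integrable_expKernel hc)

lemma integral_duhamelMajorant (hc : 0 < c) (hφ : IntegrableOn φ (Ioi 0)) :
    ∫ a, duhamelMajorant c κ φ a = (|κ| + ∫ s in Ioi 0, |φ s|) / c := by
  have hf := (integrable_indicator_iff measurableSet_Ioi).2 hφ.abs
  unfold duhamelMajorant
  rw [integral_add ((integrable_expKernel hc).const_mul _)
    (hf.integrable_convolution _ (integrable_expKernel hc)), integral_const_mul,
    integral_expKernel hc, integral_convolution_expKernel hc hf,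
    integral_indicator measurableSet_Ioi]
  ring

lemma duhamelMajorant_nonneg (a : ℝ) : 0 ≤ duhamelMajorant c κ φ a := by
  refine add_nonneg (mul_nonneg (abs_nonneg κ) (expKernel_nonneg a)) ?_
  rw [convolution_def]
  exact integral_nonneg fun s => mul_nonneg
    (indicator_nonneg (fun s _ => abs_nonneg (φ s)) s) (expKernel_nonneg _)

lemma abs_duhamel_le_duhamelMajorant (hg : ∀ u v, IntervalIntegrable g volume u v)
    (hgc : ∀ a, c ≤ g a) (hφ : IntegrableOn φ (Ioi 0)) {a : ℝ} (ha : 0 ≤ a) :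
    |duhamel g κ φ a| ≤ duhamelMajorant c κ φ a := by
  rw [duhamel, duhamelMajorant, convolution_expKernel_apply,
    expKernel, indicator_of_mem (mem_Ici.2 ha)]
  refine (abs_add_le _ _).trans (add_le_add ?_ ?_)
  · rw [abs_mul, abs_of_pos (exp_pos _)]
    gcongr
    simpa using exp_neg_integral_le hg hgc ha
  · rw [intervalIntegral.integral_of_le ha, ← norm_eq_abs]
    refine norm_integral_le_of_norm_le ?_ (ae_restrict_of_forall_mem measurableSet_Ioc ?_)
    · exact IntegrableOn.mul_continuousOn_of_subset (hφ.mono_set Ioc_subset_Ioi_self).abs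
        (by fun_prop) measurableSet_Ioc isCompact_Icc Ioc_subset_Icc_self
    · intro s hs
      rw [norm_mul, norm_eq_abs, norm_of_nonneg (exp_pos _).le]
      exact mul_le_mul_of_nonneg_left (exp_neg_integral_le hg hgc hs.2) (abs_nonneg _)

lemma integrableOn_duhamel (hc : 0 < c) (hg : ∀ u v, IntervalIntegrable g volume u v)
    (hgc : ∀ a, c ≤ g a) (hφ : IntegrableOn φ (Ioi 0)) :
    IntegrableOn (duhamel g κ φ) (Ioi 0) :=
  (integrable_duhamelMajorant hc hφ).integrableOn.mono'
    (((continuousOn_duhamel hg hφ).mono Ioi_subset_Ici_self).aestronglyMeasurable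
      measurableSet_Ioi)
    (ae_restrict_of_forall_mem measurableSet_Ioi fun _ ha =>
      abs_duhamel_le_duhamelMajorant hg hgc hφ (le_of_lt ha))

lemma integral_abs_duhamel_le (hc : 0 < c) (hg : ∀ u v, IntervalIntegrable g volume u v)
    (hgc : ∀ a, c ≤ g a) (hφ : IntegrableOn φ (Ioi 0)) :
    ∫ a in Ioi 0, |duhamel g κ φ a| ≤ (|κ| + ∫ s in Ioi 0, |φ s|) / c :=
  calc ∫ a in Ioi 0, |duhamel g κ φ a|
      ≤ ∫ a in Ioi 0, duhamelMajorant c κ φ a :=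
        setIntegral_mono_on (integrableOn_duhamel hc hg hgc hφ).abs
          (integrable_duhamelMajorant hc hφ).integrableOn measurableSet_Ioi
          fun _ ha => abs_duhamel_le_duhamelMajorant hg hgc hφ (le_of_lt ha)
    _ ≤ ∫ a, duhamelMajorant c κ φ a :=
        setIntegral_le_integral (integrable_duhamelMajorant hc hφ)
          (Filter.Eventually.of_forall duhamelMajorant_nonneg)
    _ = (|κ| + ∫ s in Ioi 0, |φ s|) / c := integral_duhamelMajorant hc hφ

lemma Measurable.intervalIntegrable_of_bounds {m M : ℝ} (hg : Measurable g)
    (hmg : ∀ a, m ≤ g a) (hgM : ∀ a, g a ≤ M) (u v : ℝ) :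
    IntervalIntegrable g volume u v :=
  (intervalIntegrable_const (c := Max.max |m| |M|)).mono_fun' hg.aestronglyMeasurable
    (Filter.Eventually.of_forall fun a => abs_le_max_abs_abs (hmg a) (hgM a))

lemma integrableOn_duhamel_and_integral_abs_le_of_measurable {M : ℝ} (hc : 0 < c)
    (hg : Measurable g) (hgc : ∀ a, c ≤ g a) (hgM : ∀ a, g a ≤ M)
    (hφ : IntegrableOn φ (Ioi 0)) :
    IntegrableOn (duhamel g κ φ) (Ioi 0) ∧
      ∫ a in Ioi 0, |duhamel g κ φ a| ≤ (|κ| + ∫ s in Ioi 0, |φ s|) / c :=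
  have hgi := hg.intervalIntegrable_of_bounds hgc hgM
  ⟨integrableOn_duhamel hc hgi hgc hφ, integral_abs_duhamel_le hc hgi hgc hφ⟩

end

lemma abs_div_le_abs_div_of_le {y c d : ℝ} (hc : 0 < c) (hcd : c ≤ d) :
    |y / d| ≤ |y| / c := by
  rw [abs_div, abs_of_pos (hc.trans_le hcd)]
  exact div_le_div_of_nonneg_left (abs_nonneg y) hc hcd

theorem resolvent_estimate_and_positivity_general
    (μv μ0 : ℝ)
    (μh δ r1 r2 : ℝ → ℝ)
    (hμhm : Measurable μh) (hδm : Measurable δ) (hr1m : Measurable r1) (hr2m : Measurable r2)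
    (hμh_lb : ∀ a, μ0 ≤ μh a) (hμv_lb : μ0 ≤ μv)
    (hδ0 : ∀ a, 0 ≤ δ a) (hr10 : ∀ a, 0 ≤ r1 a) (hr20 : ∀ a, 0 ≤ r2 a)
    (Bμh Bδ Br1 Br2 : ℝ)
    (hμhB : ∀ a, μh a ≤ Bμh) (hδB : ∀ a, δ a ≤ Bδ)
    (hr1B : ∀ a, r1 a ≤ Br1) (hr2B : ∀ a, r2 a ≤ Br2)
    (lam : ℝ) (hlam : -μ0 < lam)
    (κ y1 y2 : ℝ) (φ1 φ2 φ3 : ℝ → ℝ)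
    (hφ1 : IntegrableOn φ1 (Ioi 0)) (hφ2 : IntegrableOn φ2 (Ioi 0))
    (hφ3 : IntegrableOn φ3 (Ioi 0))
    (ψ1 ψ2 ψ3 : ℝ → ℝ) (x1 x2 : ℝ)
    (hψ1 : ∀ a, ψ1 a = κ * exp (-(∫ s in (0:ℝ)..a, (μh s + lam))) +
      ∫ s in (0:ℝ)..a, φ1 s * exp (-(∫ τ in s..a, (μh τ + lam))))
    (hψ2 : ∀ a, ψ2 a =
      ∫ s in (0:ℝ)..a, φ2 s * exp (-(∫ τ in s..a, (μh τ + δ τ + r1 τ + lam))))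
    (hψ3 : ∀ a, ψ3 a =
      ∫ s in (0:ℝ)..a, φ3 s * exp (-(∫ τ in s..a, (μh τ + r2 τ + lam))))
    (hx1 : x1 = y1 / (lam + μv)) (hx2 : x2 = y2 / (lam + μv)) :
    (IntegrableOn ψ1 (Ioi 0) ∧ IntegrableOn ψ2 (Ioi 0) ∧ IntegrableOn ψ3 (Ioi 0)) ∧
    ((∫ a in Ioi (0:ℝ), |ψ1 a|) + (∫ a in Ioi (0:ℝ), |ψ2 a|) + (∫ a in Ioi (0:ℝ), |ψ3 a|)
        + |x1| + |x2|
      ≤ (|κ| + (∫ a in Ioi (0:ℝ), |φ1 a|) + (∫ a in Ioi (0:ℝ), |φ2 a|)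
          + (∫ a in Ioi (0:ℝ), |φ3 a|) + |y1| + |y2|) / (lam + μ0)) ∧
    (0 ≤ κ →
      (∀ᵐ a ∂(volume.restrict (Ioi (0:ℝ))), 0 ≤ φ1 a) →
      (∀ᵐ a ∂(volume.restrict (Ioi (0:ℝ))), 0 ≤ φ2 a) →
      (∀ᵐ a ∂(volume.restrict (Ioi (0:ℝ))), 0 ≤ φ3 a) →
      0 ≤ y1 → 0 ≤ y2 →
      ((∀ᵐ a ∂(volume.restrict (Ioi (0:ℝ))), 0 ≤ ψ1 a) ∧
       (∀ᵐ a ∂(volume.restrict (Ioi (0:ℝ))), 0 ≤ ψ2 a) ∧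
       (∀ᵐ a ∂(volume.restrict (Ioi (0:ℝ))), 0 ≤ ψ3 a) ∧
       0 ≤ x1 ∧ 0 ≤ x2)) := by
  have hc : 0 < lam + μ0 := by linarith
  have hv : 0 < lam + μv := by linarith
  obtain rfl : ψ1 = duhamel (fun s => μh s + lam) κ φ1 := funext hψ1
  obtain rfl : ψ2 = duhamel (fun s => μh s + δ s + r1 s + lam) 0 φ2 :=
    funext fun a => by simp [hψ2, duhamel]
  obtain rfl : ψ3 = duhamel (fun s => μh s + r2 s + lam) 0 φ3 :=
    funext fun a => by simp [hψ3, duhamel]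
  subst hx1 hx2
  obtain ⟨hi1, he1⟩ := integrableOn_duhamel_and_integral_abs_le_of_measurable
    (g := fun s => μh s + lam) (κ := κ) (M := Bμh + lam) hc (by fun_prop)
    (fun a => by linarith [hμh_lb a]) (fun a => by linarith [hμhB a]) hφ1
  obtain ⟨hi2, he2⟩ := integrableOn_duhamel_and_integral_abs_le_of_measurable
    (g := fun s => μh s + δ s + r1 s + lam) (κ := 0) (M := Bμh + Bδ + Br1 + lam) hc
    (by fun_prop) (fun a => by linarith [hμh_lb a, hδ0 a, hr10 a])
    (fun a => by linarith [hμhB a, hδB a, hr1B a]) hφ2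
  obtain ⟨hi3, he3⟩ := integrableOn_duhamel_and_integral_abs_le_of_measurable
    (g := fun s => μh s + r2 s + lam) (κ := 0) (M := Bμh + Br2 + lam) hc (by fun_prop)
    (fun a => by linarith [hμh_lb a, hr20 a]) (fun a => by linarith [hμhB a, hr2B a]) hφ3
  refine ⟨⟨hi1, hi2, hi3⟩, ?_, fun hκ h1 h2 h3 hy1 hy2 =>
    ⟨duhamel_nonneg hκ h1, duhamel_nonneg le_rfl h2, duhamel_nonneg le_rfl h3,
      div_nonneg hy1 hv.le, div_nonneg hy2 hv.le⟩⟩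
  have ex1 := abs_div_le_abs_div_of_le (y := y1) (d := lam + μv) hc (by linarith)
  have ex2 := abs_div_le_abs_div_of_le (y := y2) (d := lam + μv) hc (by linarith)
  rw [abs_zero, zero_add] at he2 he3
  calc _ ≤ (|κ| + ∫ a in Ioi 0, |φ1 a|) / (lam + μ0) + (∫ a in Ioi 0, |φ2 a|) / (lam + μ0)
        + (∫ a in Ioi 0, |φ3 a|) / (lam + μ0) + |y1| / (lam + μ0) + |y2| / (lam + μ0) := by
        gcongr
    _ = _ := by ring

/-- Resolvent estimate and positivity for the linear operator `A` of the
age-structured SIRS/SI malaria model (Hille–Yosida property). -/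
theorem resolvent_estimate_and_positivity
    (Λh Λv μv μ0 : ℝ)
    (μh δ r1 r2 : ℝ → ℝ)
    (hΛh : 0 < Λh) (hΛv : 0 < Λv) (hμv : 0 < μv) (hμ0 : 0 < μ0)
    (hμhm : Measurable μh) (hδm : Measurable δ) (hr1m : Measurable r1) (hr2m : Measurable r2)
    (hμh_lb : ∀ a, μ0 ≤ μh a) (hμv_lb : μ0 ≤ μv)
    (hδ0 : ∀ a, 0 ≤ δ a) (hr10 : ∀ a, 0 ≤ r1 a) (hr20 : ∀ a, 0 ≤ r2 a)
    (Bμh Bδ Br1 Br2 : ℝ)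
    (hμhB : ∀ a, μh a ≤ Bμh) (hδB : ∀ a, δ a ≤ Bδ)
    (hr1B : ∀ a, r1 a ≤ Br1) (hr2B : ∀ a, r2 a ≤ Br2)
    (lam : ℝ) (hlam : -μ0 < lam)
    (κ y1 y2 : ℝ) (φ1 φ2 φ3 : ℝ → ℝ)
    (hφ1m : Measurable φ1) (hφ2m : Measurable φ2) (hφ3m : Measurable φ3)
    (hφ1 : IntegrableOn φ1 (Ioi 0)) (hφ2 : IntegrableOn φ2 (Ioi 0))
    (hφ3 : IntegrableOn φ3 (Ioi 0))
    (ψ1 ψ2 ψ3 : ℝ → ℝ) (x1 x2 : ℝ)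
    (hψ1 : ∀ a, ψ1 a = κ * exp (-(∫ s in (0:ℝ)..a, (μh s + lam))) +
      ∫ s in (0:ℝ)..a, φ1 s * exp (-(∫ τ in s..a, (μh τ + lam))))
    (hψ2 : ∀ a, ψ2 a =
      ∫ s in (0:ℝ)..a, φ2 s * exp (-(∫ τ in s..a, (μh τ + δ τ + r1 τ + lam))))
    (hψ3 : ∀ a, ψ3 a =
      ∫ s in (0:ℝ)..a, φ3 s * exp (-(∫ τ in s..a, (μh τ + r2 τ + lam))))
    (hx1 : x1 = y1 / (lam + μv)) (hx2 : x2 = y2 / (lam + μv)) :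
    (IntegrableOn ψ1 (Ioi 0) ∧ IntegrableOn ψ2 (Ioi 0) ∧ IntegrableOn ψ3 (Ioi 0)) ∧
    ((∫ a in Ioi (0:ℝ), |ψ1 a|) + (∫ a in Ioi (0:ℝ), |ψ2 a|) + (∫ a in Ioi (0:ℝ), |ψ3 a|)
        + |x1| + |x2|
      ≤ (|κ| + (∫ a in Ioi (0:ℝ), |φ1 a|) + (∫ a in Ioi (0:ℝ), |φ2 a|)
          + (∫ a in Ioi (0:ℝ), |φ3 a|) + |y1| + |y2|) / (lam + μ0)) ∧
    (0 ≤ κ →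
      (∀ᵐ a ∂(volume.restrict (Ioi (0:ℝ))), 0 ≤ φ1 a) →
      (∀ᵐ a ∂(volume.restrict (Ioi (0:ℝ))), 0 ≤ φ2 a) →
      (∀ᵐ a ∂(volume.restrict (Ioi (0:ℝ))), 0 ≤ φ3 a) →
      0 ≤ y1 → 0 ≤ y2 →
      ((∀ᵐ a ∂(volume.restrict (Ioi (0:ℝ))), 0 ≤ ψ1 a) ∧
       (∀ᵐ a ∂(volume.restrict (Ioi (0:ℝ))), 0 ≤ ψ2 a) ∧
       (∀ᵐ a ∂(volume.restrict (Ioi (0:ℝ))), 0 ≤ ψ3 a) ∧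
       0 ≤ x1 ∧ 0 ≤ x2)) :=
  resolvent_estimate_and_positivity_general μv μ0 μh δ r1 r2 hμhm hδm hr1m hr2m hμh_lb hμv_lb hδ0
    hr10 hr20 Bμh Bδ Br1 Br2 hμhB hδB hr1B hr2B lam hlam κ y1 y2 φ1 φ2 φ3 hφ1 hφ2 hφ3 ψ1 ψ2 ψ3 x1 x2
    hψ1 hψ2 hψ3 hx1 hx2
end

section
/- Let m > 0 and set c_m = 2m(‖β_h‖_{L^∞} + ‖β_v‖_{L^∞}) + ‖r_1‖_{L^∞} + ‖r_2‖_{L^∞}. For w = (s_h, i_h, r_h, S_v, I_v) with s_h, i_h, r_h ∈ L^1(0,∞) and S_v, I_v ∈ ℝ, define ‖w‖ = ‖s_h‖_{L^1} + ‖i_h‖_{L^1} + ‖r_h‖_{L^1} + |S_v| + |I_v| and let F(w) = (Λ_h, -β_v·s_h·I_v + r_2·r_h, β_v·s_h·I_v, r_1·i_h, Λ_v - S_v·∫_0^∞ β_h(a)i_h(a)da, S_v·∫_0^∞ β_h(a)i_h(a)da), where the second, third and fourth components are functions of a ∈ (0,∞). Then for all w, w' with ‖w‖ ≤ m and ‖w'‖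 ≤ m one has ‖F(w) - F(w')‖ ≤ c_m·‖w - w'‖ (with ‖F(w)-F(w')‖ measured as the sum of the absolute value of the real components and the L^1 norms of the function components). -/
/-!
Each nonlinear component of `F(w) - F(w')` is an `L^∞` coefficient `β` times a difference of
products `u v - u' v' = u (v - v') + (u - u') v'`, one factor real and the other an `L¹` function
or its integral against `β_h`. Hölder's inequality for the exponents `(∞, 1)`, together with
`‖w‖, ‖w'‖ ≤ m` for the undifferenced factors, bounds it by `m ‖β‖_∞ ‖w - w'‖`, and the linear
components by `‖r_i‖_∞ ‖w - w'‖`. The `β_v`- and `β_h`-terms each occur twice, whence the `2`.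
-/

open MeasureTheory Set

theorem abs_mul_sub_mul_le (x y x' y' : ℝ) :
    |x * y - x' * y'| ≤ |x| * |y - y'| + |x - x'| * |y'| := by
  calc |x * y - x' * y'| = |x * (y - y') + (x - x') * y'| := by ring_nf
    _ ≤ |x| * |y - y'| + |x - x'| * |y'| := by
      simpa only [abs_mul] using abs_add_le (x * (y - y')) ((x - x') * y')

section

variable {α : Type*} [MeasurableSpace α] {μ : Measure α}

theorem MeasureTheory.MemLp.ae_abs_le_eLpNorm_top {f : α → ℝ} (hf : MemLp f ⊤ μ) :
    ∀ᵐ a ∂μ, |f a| ≤ (eLpNorm f ⊤ μ).toReal := by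
  filter_upwards [enorm_ae_le_eLpNormEssSup f μ] with a ha
  rw [eLpNorm_exponent_top, ← Real.norm_eq_abs, ← toReal_enorm]
  exact ENNReal.toReal_mono (eLpNorm_exponent_top (f := f) ▸ hf.2.ne) ha

theorem integral_abs_add_le {f g : α → ℝ} (hf : Integrable f μ) (hg : Integrable g μ) :
    ∫ a, |f a + g a| ∂μ ≤ ∫ a, |f a| ∂μ + ∫ a, |g a| ∂μ := by
  rw [← integral_add hf.abs hg.abs]
  exact integral_mono_of_nonneg (ae_of_all _ fun a => abs_nonneg _) (hf.abs.add hg.abs)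
    (ae_of_all _ fun a => abs_add_le _ _)

theorem integral_abs_neg_add_sub_le {u u' v v' : α → ℝ}
    (hu : Integrable (fun a => u a - u' a) μ) (hv : Integrable (fun a => v a - v' a) μ) :
    ∫ a, |(-u a + v a) - (-u' a + v' a)| ∂μ ≤ ∫ a, |u a - u' a| ∂μ + ∫ a, |v a - v' a| ∂μ := by
  have hrw : ∀ a, (-u a + v a) - (-u' a + v' a) = -(u a - u' a) + (v a - v' a) :=
    fun a => by ring
  simpa only [hrw, Pi.neg_apply, abs_neg] using integral_abs_add_le hu.neg hv

theorem integral_abs_mul_le_eLpNorm_top_mul {g f : α → ℝ} (hg : MemLp g ⊤ μ)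
    (hf : Integrable f μ) :
    ∫ a, |g a * f a| ∂μ ≤ (eLpNorm g ⊤ μ).toReal * ∫ a, |f a| ∂μ := by
  rw [← integral_const_mul]
  refine integral_mono_of_nonneg (ae_of_all _ fun a => abs_nonneg _) (hf.abs.const_mul _) ?_
  filter_upwards [hg.ae_abs_le_eLpNorm_top] with a ha
  rw [abs_mul]
  exact mul_le_mul_of_nonneg_right ha (abs_nonneg _)

theorem abs_integral_mul_le_eLpNorm_top_mul {g f : α → ℝ} (hg : MemLp g ⊤ μ)
    (hf : Integrable f μ) :
    |∫ a, g a * f a ∂μ| ≤ (eLpNorm g ⊤ μ).toReal * ∫ a, |f a| ∂μ :=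
  abs_integral_le_integral_abs.trans (integral_abs_mul_le_eLpNorm_top_mul hg hf)

theorem integral_abs_mul_sub_mul_le {g f f' : α → ℝ} (hg : MemLp g ⊤ μ)
    (hf : Integrable f μ) (hf' : Integrable f' μ) :
    ∫ a, |g a * f a - g a * f' a| ∂μ ≤ (eLpNorm g ⊤ μ).toReal * ∫ a, |f a - f' a| ∂μ := by
  simpa only [Pi.sub_apply, mul_sub] using integral_abs_mul_le_eLpNorm_top_mul hg (hf.sub hf')

variable {g s s' : α → ℝ} {c c' M : ℝ}

theorem integral_abs_mul_const_sub_mul_const_le (hs : Integrable s μ) (hs' : Integrable s' μ) :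
    ∫ a, |s a * c - s' a * c'| ∂μ
      ≤ (∫ a, |s a| ∂μ) * |c - c'| + (∫ a, |s a - s' a| ∂μ) * |c'| := by
  rw [← integral_mul_const, ← integral_mul_const, ← integral_add]
  · exact integral_mono_of_nonneg (ae_of_all _ fun a => abs_nonneg _)
      ((hs.abs.mul_const _).add ((hs.sub hs').abs.mul_const _))
      (ae_of_all _ fun a => abs_mul_sub_mul_le _ _ _ _)
  · exact hs.abs.mul_const _
  · exact (hs.sub hs').abs.mul_const _

theorem integral_abs_mul_mul_const_sub_le (hg : MemLp g ⊤ μ) (hs : Integrable s μ)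
    (hs' : Integrable s' μ) (hsM : ∫ a, |s a| ∂μ ≤ M) (hc'M : |c'| ≤ M) :
    ∫ a, |g a * s a * c - g a * s' a * c'| ∂μ
      ≤ (eLpNorm g ⊤ μ).toReal * M * (|c - c'| + ∫ a, |s a - s' a| ∂μ) := by
  have hrw : ∀ a, g a * s a * c - g a * s' a * c' = g a * (s a * c - s' a * c') :=
    fun a => by ring
  simp only [hrw]
  calc ∫ a, |g a * (s a * c - s' a * c')| ∂μ
      ≤ (eLpNorm g ⊤ μ).toReal * ∫ a, |s a * c - s' a * c'| ∂μ :=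
        integral_abs_mul_le_eLpNorm_top_mul hg ((hs.mul_const c).sub (hs'.mul_const c'))
    _ ≤ (eLpNorm g ⊤ μ).toReal * (M * |c - c'| + (∫ a, |s a - s' a| ∂μ) * M) := by
        gcongr
        refine (integral_abs_mul_const_sub_mul_const_le hs hs').trans ?_
        gcongr
    _ = (eLpNorm g ⊤ μ).toReal * M * (|c - c'| + ∫ a, |s a - s' a| ∂μ) := by ring

theorem abs_mul_integral_mul_sub_le {S S' : ℝ} (hg : MemLp g ⊤ μ) (hs : Integrable s μ)
    (hs' : Integrable s' μ) (hSM : |S| ≤ M) (hs'M : ∫ a, |s' a| ∂μ ≤ M) :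
    |S * ∫ a, g a * s a ∂μ - S' * ∫ a, g a * s' a ∂μ|
      ≤ (eLpNorm g ⊤ μ).toReal * M * (|S - S'| + ∫ a, |s a - s' a| ∂μ) := by
  have hdiff : (∫ a, g a * s a ∂μ) - ∫ a, g a * s' a ∂μ = ∫ a, g a * (s - s') a ∂μ := by
    simp only [Pi.sub_apply, mul_sub]
    exact (integral_sub (hs.mul_of_top_right hg) (hs'.mul_of_top_right hg)).symm
  calc |S * ∫ a, g a * s a ∂μ - S' * ∫ a, g a * s' a ∂μ|
      ≤ |S| * |∫ a, g a * (s - s') a ∂μ| + |S - S'| * |∫ a, g a * s' a ∂μ| := by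
        rw [← hdiff]; exact abs_mul_sub_mul_le _ _ _ _
    _ ≤ M * ((eLpNorm g ⊤ μ).toReal * ∫ a, |(s - s') a| ∂μ)
          + |S - S'| * ((eLpNorm g ⊤ μ).toReal * M) := by
        gcongr
        · exact (abs_nonneg _).trans hSM
        · exact abs_integral_mul_le_eLpNorm_top_mul hg (hs.sub hs')
        · exact (abs_integral_mul_le_eLpNorm_top_mul hg hs').trans (by gcongr)
    _ = (eLpNorm g ⊤ μ).toReal * M * (|S - S'| + ∫ a, |s a - s' a| ∂μ) := by
        simp only [Pi.sub_apply]; ring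

theorem integral_abs_neg_mul_mul_add_mul_sub_le {r h h' : α → ℝ} (hg : MemLp g ⊤ μ)
    (hr : MemLp r ⊤ μ) (hs : Integrable s μ) (hs' : Integrable s' μ) (hh : Integrable h μ)
    (hh' : Integrable h' μ) :
    ∫ a, |(-(g a) * s a * c + r a * h a) - (-(g a) * s' a * c' + r a * h' a)| ∂μ
      ≤ ∫ a, |g a * s a * c - g a * s' a * c'| ∂μ + ∫ a, |r a * h a - r a * h' a| ∂μ := by
  simp only [neg_mul]
  exact integral_abs_neg_add_sub_le
    (((hs.mul_of_top_right hg).mul_const c).sub ((hs'.mul_of_top_right hg).mul_const c'))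
    ((hh.mul_of_top_right hr).sub (hh'.mul_of_top_right hr))

end

theorem F_lipschitz_on_bounded_sets_general
    (Λh Λv : ℝ) (r1 r2 βh βv : ℝ → ℝ)
    (hr1B : MemLp r1 ⊤ (volume.restrict (Ioi (0:ℝ))))
    (hr2B : MemLp r2 ⊤ (volume.restrict (Ioi (0:ℝ))))
    (hβhB : MemLp βh ⊤ (volume.restrict (Ioi (0:ℝ))))
    (hβvB : MemLp βv ⊤ (volume.restrict (Ioi (0:ℝ))))
    (m cm : ℝ)
    (hcm : cm = 2 * m * ((eLpNorm βh ⊤ (volume.restrict (Ioi (0:ℝ)))).toReal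
          + (eLpNorm βv ⊤ (volume.restrict (Ioi (0:ℝ)))).toReal)
        + (eLpNorm r1 ⊤ (volume.restrict (Ioi (0:ℝ)))).toReal
        + (eLpNorm r2 ⊤ (volume.restrict (Ioi (0:ℝ)))).toReal)
    (sh ih rh sh' ih' rh' : ℝ → ℝ) (Sv Iv Sv' Iv' : ℝ)
    (hsh : IntegrableOn sh (Ioi 0)) (hih : IntegrableOn ih (Ioi 0))
    (hrh : IntegrableOn rh (Ioi 0))
    (hsh' : IntegrableOn sh' (Ioi 0)) (hih' : IntegrableOn ih' (Ioi 0))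
    (hrh' : IntegrableOn rh' (Ioi 0))
    (hwm : (∫ a in Ioi (0:ℝ), |sh a|) + (∫ a in Ioi (0:ℝ), |ih a|)
        + (∫ a in Ioi (0:ℝ), |rh a|) + |Sv| + |Iv| ≤ m)
    (hwm' : (∫ a in Ioi (0:ℝ), |sh' a|) + (∫ a in Ioi (0:ℝ), |ih' a|)
        + (∫ a in Ioi (0:ℝ), |rh' a|) + |Sv'| + |Iv'| ≤ m) :
    |Λh - Λh|
      + (∫ a in Ioi (0:ℝ), |(-(βv a) * sh a * Iv + r2 a * rh a)
            - (-(βv a) * sh' a * Iv' + r2 a * rh' a)|)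
      + (∫ a in Ioi (0:ℝ), |βv a * sh a * Iv - βv a * sh' a * Iv'|)
      + (∫ a in Ioi (0:ℝ), |r1 a * ih a - r1 a * ih' a|)
      + |(Λv - Sv * ∫ a in Ioi (0:ℝ), βh a * ih a)
            - (Λv - Sv' * ∫ a in Ioi (0:ℝ), βh a * ih' a)|
      + |Sv * (∫ a in Ioi (0:ℝ), βh a * ih a) - Sv' * (∫ a in Ioi (0:ℝ), βh a * ih' a)|
    ≤ cm * ((∫ a in Ioi (0:ℝ), |sh a - sh' a|) + (∫ a in Ioi (0:ℝ), |ih a - ih' a|)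
        + (∫ a in Ioi (0:ℝ), |rh a - rh' a|) + |Sv - Sv'| + |Iv - Iv'|) := by
  have hL1 : ∀ f : ℝ → ℝ, 0 ≤ ∫ a in Ioi (0:ℝ), |f a| := fun f =>
    integral_nonneg fun a => abs_nonneg _
  have hshm : ∫ a in Ioi (0:ℝ), |sh a| ≤ m := by
    linarith [hL1 ih, hL1 rh, abs_nonneg Sv, abs_nonneg Iv]
  have hSvm : |Sv| ≤ m := by linarith [hL1 sh, hL1 ih, hL1 rh, abs_nonneg Iv]
  have hih'm : ∫ a in Ioi (0:ℝ), |ih' a| ≤ m := by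
    linarith [hL1 sh', hL1 rh', abs_nonneg Sv', abs_nonneg Iv']
  have hIv'm : |Iv'| ≤ m := by linarith [hL1 sh', hL1 ih', hL1 rh', abs_nonneg Sv']
  have hih_eqn := integral_abs_mul_mul_const_sub_le (c := Iv) hβvB hsh hsh' hshm hIv'm
  have hIv_eqn := abs_mul_integral_mul_sub_le (S' := Sv') hβhB hih hih' hSvm hih'm
  have hrh_eqn := integral_abs_mul_sub_mul_le hr1B hih hih'
  have hr2 := integral_abs_mul_sub_mul_le hr2B hrh hrh'
  have hsh_eqn := integral_abs_neg_mul_mul_add_mul_sub_le (c := Iv) (c' := Iv')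
    hβvB hr2B hsh hsh' hrh hrh'
  rw [sub_self, abs_zero, sub_sub_sub_cancel_left, abs_sub_comm (Sv' * _), hcm]
  have hm : 0 ≤ m := (abs_nonneg _).trans hSvm
  have hG : ∀ g : ℝ → ℝ, 0 ≤ (eLpNorm g ⊤ (volume.restrict (Ioi (0:ℝ)))).toReal :=
    fun g => ENNReal.toReal_nonneg
  have hDs : 0 ≤ ∫ a in Ioi (0:ℝ), |sh a - sh' a| := hL1 _
  have hDi : 0 ≤ ∫ a in Ioi (0:ℝ), |ih a - ih' a| := hL1 _
  have hDr : 0 ≤ ∫ a in Ioi (0:ℝ), |rh a - rh' a| := hL1 _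
  nlinarith [mul_nonneg hm (hG βh), mul_nonneg hm (hG βv), hG r1, hG r2,
    abs_nonneg (Sv - Sv'), abs_nonneg (Iv - Iv')]

/-- The nonlinear part `F` of the abstract Cauchy problem of the age-structured
SIRS/SI malaria model is Lipschitz continuous on bounded sets, with Lipschitz
constant `c_m = 2m(‖β_h‖_∞ + ‖β_v‖_∞) + ‖r_1‖_∞ + ‖r_2‖_∞` on the ball of radius `m`. -/
theorem F_lipschitz_on_bounded_sets
    (Λh Λv : ℝ) (r1 r2 βh βv : ℝ → ℝ)
    (hΛh : 0 < Λh) (hΛv : 0 < Λv)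
    (hr1m : Measurable r1) (hr2m : Measurable r2)
    (hβhm : Measurable βh) (hβvm : Measurable βv)
    (hr10 : ∀ a, 0 ≤ r1 a) (hr20 : ∀ a, 0 ≤ r2 a)
    (hβh0 : ∀ a, 0 ≤ βh a) (hβv0 : ∀ a, 0 ≤ βv a)
    (hr1B : MemLp r1 ⊤ (volume.restrict (Ioi (0:ℝ))))
    (hr2B : MemLp r2 ⊤ (volume.restrict (Ioi (0:ℝ))))
    (hβhB : MemLp βh ⊤ (volume.restrict (Ioi (0:ℝ))))
    (hβvB : MemLp βv ⊤ (volume.restrict (Ioi (0:ℝ))))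
    (m cm : ℝ) (hm : 0 < m)
    (hcm : cm = 2 * m * ((eLpNorm βh ⊤ (volume.restrict (Ioi (0:ℝ)))).toReal
          + (eLpNorm βv ⊤ (volume.restrict (Ioi (0:ℝ)))).toReal)
        + (eLpNorm r1 ⊤ (volume.restrict (Ioi (0:ℝ)))).toReal
        + (eLpNorm r2 ⊤ (volume.restrict (Ioi (0:ℝ)))).toReal)
    (sh ih rh sh' ih' rh' : ℝ → ℝ) (Sv Iv Sv' Iv' : ℝ)
    (hsh : IntegrableOn sh (Ioi 0)) (hih : IntegrableOn ih (Ioi 0))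
    (hrh : IntegrableOn rh (Ioi 0))
    (hsh' : IntegrableOn sh' (Ioi 0)) (hih' : IntegrableOn ih' (Ioi 0))
    (hrh' : IntegrableOn rh' (Ioi 0))
    (hwm : (∫ a in Ioi (0:ℝ), |sh a|) + (∫ a in Ioi (0:ℝ), |ih a|)
        + (∫ a in Ioi (0:ℝ), |rh a|) + |Sv| + |Iv| ≤ m)
    (hwm' : (∫ a in Ioi (0:ℝ), |sh' a|) + (∫ a in Ioi (0:ℝ), |ih' a|)
        + (∫ a in Ioi (0:ℝ), |rh' a|) + |Sv'| + |Iv'| ≤ m) :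
    |Λh - Λh|
      + (∫ a in Ioi (0:ℝ), |(-(βv a) * sh a * Iv + r2 a * rh a)
            - (-(βv a) * sh' a * Iv' + r2 a * rh' a)|)
      + (∫ a in Ioi (0:ℝ), |βv a * sh a * Iv - βv a * sh' a * Iv'|)
      + (∫ a in Ioi (0:ℝ), |r1 a * ih a - r1 a * ih' a|)
      + |(Λv - Sv * ∫ a in Ioi (0:ℝ), βh a * ih a)
            - (Λv - Sv' * ∫ a in Ioi (0:ℝ), βh a * ih' a)|
      + |Sv * (∫ a in Ioi (0:ℝ), βh a * ih a) - Sv' * (∫ a in Ioi (0:ℝ), βh a * ih' a)|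
    ≤ cm * ((∫ a in Ioi (0:ℝ), |sh a - sh' a|) + (∫ a in Ioi (0:ℝ), |ih a - ih' a|)
        + (∫ a in Ioi (0:ℝ), |rh a - rh' a|) + |Sv - Sv'| + |Iv - Iv'|) :=
  F_lipschitz_on_bounded_sets_general Λh Λv r1 r2 βh βv hr1B hr2B hβhB hβvB m cm hcm sh ih rh sh'
    ih' rh' Sv Iv Sv' Iv' hsh hih hrh hsh' hih' hrh' hwm hwm'
end

section
/- Let K : L^1(0,∞) × ℝ → L^1(0,∞) × ℝ be the continuous linear operator defined by K(B_1, B_2) = ( a ↦ β_v(a)·s_h^0(a)·B_2/μ_v , S_v^0·∫_0^∞ ∫_0^∞ β_h(ξ+s)·B_1(ξ)·exp(-∫_ξ^{ξ+s}(μ_h(u)+δ(u)+r_1(u))du) dξ ds ). Then K is well defined, bounded and compact, and its spectral radius equals R_0. -/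
/-!
The operator has the block form `K (B₁, B₂) = (B₂ • f, L B₁)`, where `f = βᵥ s_h⁰ / μᵥ` lies in
`L¹(0, ∞)` and `L` is integration against the survival kernel
`βₕ(ξ + s) exp (-∫_ξ^{ξ+s} (μₕ + δ + r₁))`. The kernel is bounded by `sup βₕ · e^{-μ₀ s}`, which is
integrable in `s`, so Fubini makes `L` a bounded functional. An operator of this form factors
through `ℝ × ℝ`, hence is compact, and for `z ≠ 0` one solves `(z - K) x = y` explicitly unless
`z² = L f`, in which case `(f, z)` is an eigenvector. So the spectral radius is `√(L f)`, and
unfolding `L f` gives `R₀²`.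
-/

open MeasureTheory Real Set

namespace ContinuousLinearMap

variable {E : Type*} [NormedAddCommGroup E] [NormedSpace ℝ E] (f : E) (L : E →L[ℝ] ℝ)

def antidiag : (E × ℝ) →L[ℝ] (E × ℝ) :=
  ((snd ℝ E ℝ).smulRight f).prod (L.comp (fst ℝ E ℝ))

@[simp]
lemma antidiag_apply (x : E × ℝ) : antidiag f L x = (x.2 • f, L x.1) := rfl

lemma isCompactOperator_antidiag : IsCompactOperator (antidiag f L) := by
  have hP : IsCompactOperator ((snd ℝ E ℝ).prod (L.comp (fst ℝ E ℝ))) :=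
    isCompactOperator_of_locallyCompactSpace_dom _
  exact hP.clm_comp (((fst ℝ ℝ ℝ).smulRight f).prod (snd ℝ ℝ ℝ))

lemma algebraMap_sub_antidiag_apply (z : ℝ) (x : E × ℝ) :
    (algebraMap ℝ _ z - antidiag f L) x = (z • x.1 - x.2 • f, z * x.2 - L x.1) :=
  rfl

lemma isUnit_algebraMap_sub_antidiag {z : ℝ} (hz : z ≠ 0) (hzc : z ^ 2 ≠ L f) :
    IsUnit (algebraMap ℝ _ z - antidiag f L) := by
  have hd : z ^ 2 - L f ≠ 0 := sub_ne_zero.mpr hzc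
  -- `g y` is the second component of the solution `x` of `(z - antidiag f L) x = y`
  let g : (E × ℝ) →L[ℝ] ℝ := (z ^ 2 - L f)⁻¹ • (z • snd ℝ E ℝ + L.comp (fst ℝ E ℝ))
  have hg (y : E × ℝ) : g y = (z * y.2 + L y.1) / (z ^ 2 - L f) := by
    simp only [g, smul_add, add_apply, smul_apply, coe_snd', smul_eq_mul, comp_apply, coe_fst']
    ring
  let M : (E × ℝ) →L[ℝ] (E × ℝ) := (z⁻¹ • (fst ℝ E ℝ + g.smulRight f)).prod g
  have hM (y : E × ℝ) : M y = (z⁻¹ • (y.1 + g y • f), g y) := rfl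
  refine isUnit_iff_exists.mpr ⟨M, ext fun y => ?_, ext fun x => ?_⟩
  · have h2 : z * g y - L (z⁻¹ • (y.1 + g y • f)) = y.2 := by
      rw [map_smul, map_add, map_smul, hg, smul_eq_mul, smul_eq_mul]
      field_simp
      ring
    simp only [mul_apply_eq_comp, hM, algebraMap_sub_antidiag_apply, smul_smul, mul_inv_cancel₀ hz,
      one_smul, add_sub_cancel_right, h2, one_apply_eq_self]
  · have h2 : g (z • x.1 - x.2 • f, z * x.2 - L x.1) = x.2 := by
      rw [hg, map_sub, map_smul, map_smul, smul_eq_mul, smul_eq_mul]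
      field_simp
      ring
    simp only [mul_apply_eq_comp, algebraMap_sub_antidiag_apply, hM, h2, sub_add_cancel, smul_smul,
      inv_mul_cancel₀ hz, one_smul, one_apply_eq_self]

lemma mem_spectrum_antidiag {z : ℝ} (hz : z ≠ 0) (hzc : z ^ 2 = L f) :
    z ∈ spectrum ℝ (antidiag f L) := by
  intro hunit
  have hker : (algebraMap ℝ _ z - antidiag f L) (f, z) = 0 := by
    rw [algebraMap_sub_antidiag_apply, ← hzc]
    ext <;> simp [sq]
  have h := (isHomeomorph_of_isUnit hunit).injective (hker.trans (map_zero _).symm)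
  exact hz (congrArg Prod.snd h)

lemma spectralRadius_antidiag :
    spectralRadius ℝ (antidiag f L) = ENNReal.ofReal √(L f) := by
  refine le_antisymm (iSup₂_le fun z hz => ?_) ?_
  · rcases eq_or_ne z 0 with rfl | hz0
    · simp
    have hzc : z ^ 2 = L f := by
      by_contra hzc
      exact hz (isUnit_algebraMap_sub_antidiag f L hz0 hzc)
    rw [← enorm_eq_nnnorm, Real.enorm_eq_ofReal_abs, ← hzc, Real.sqrt_sq_eq_abs]
  · rcases le_or_gt (L f) 0 with hc | hc
    · simp [Real.sqrt_eq_zero'.mpr hc]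
    have hmem := mem_spectrum_antidiag f L (Real.sqrt_pos.mpr hc).ne' (Real.sq_sqrt hc.le)
    refine le_trans ?_ (le_iSup₂ (f := fun z (_ : z ∈ spectrum ℝ (antidiag f L)) =>
      (‖z‖₊ : ENNReal)) _ hmem)
    rw [← enorm_eq_nnnorm, Real.enorm_eq_ofReal_abs, abs_of_nonneg (Real.sqrt_nonneg _)]

end ContinuousLinearMap

section KernelFunctional

variable {α β : Type*} [MeasurableSpace α] [MeasurableSpace β] {μ : Measure α} {ν : Measure β}
  {k : α × β → ℝ} {w : α → ℝ}

lemma ae_norm_kernel_mul_le (hkw : ∀ᵐ s ∂μ, ∀ ξ, |k (s, ξ)| ≤ w s) (g : β → ℝ) :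
    ∀ᵐ p ∂(μ.prod ν), ‖k p * g p.2‖ ≤ w p.1 * |g p.2| := by
  filter_upwards [Measure.quasiMeasurePreserving_fst.ae hkw] with p hp
  rw [Real.norm_eq_abs, abs_mul]
  exact mul_le_mul_of_nonneg_right (hp p.2) (abs_nonneg _)

lemma integrable_kernel_mul [SFinite μ] [SFinite ν] (hk : AEStronglyMeasurable k (μ.prod ν))
    (hw : Integrable w μ) (hkw : ∀ᵐ s ∂μ, ∀ ξ, |k (s, ξ)| ≤ w s) {g : β → ℝ} (hg : Integrable g ν) :
    Integrable (fun p => k p * g p.2) (μ.prod ν) :=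
  (hw.mul_prod hg.abs).mono' (hk.mul hg.1.comp_snd) (ae_norm_kernel_mul_le hkw g)

lemma integral_kernel_mul_congr {g g' : β → ℝ} (h : g =ᵐ[ν] g') :
    ∫ p, k p * g p.2 ∂(μ.prod ν) = ∫ p, k p * g' p.2 ∂(μ.prod ν) :=
  integral_congr_ae <| (Measure.quasiMeasurePreserving_snd.ae_eq h).mono fun p hp =>
    congrArg (k p * ·) hp

lemma exists_clm_eq_integral_kernel_mul [SFinite μ] [SFinite ν]
    (hk : AEStronglyMeasurable k (μ.prod ν)) (hw : Integrable w μ)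
    (hkw : ∀ᵐ s ∂μ, ∀ ξ, |k (s, ξ)| ≤ w s) :
    ∃ L : Lp ℝ 1 ν →L[ℝ] ℝ, ∀ g : Lp ℝ 1 ν,
      L g = ∫ s, ∫ ξ, k (s, ξ) * g ξ ∂ν ∂μ := by
  have hint (g : Lp ℝ 1 ν) := integrable_kernel_mul hk hw hkw (L1.integrable_coeFn g)
  let L₀ : Lp ℝ 1 ν →ₗ[ℝ] ℝ :=
    { toFun g := ∫ p, k p * g p.2 ∂(μ.prod ν)
      map_add' g g' := by
        rw [integral_kernel_mul_congr (Lp.coeFn_add g g'), ← integral_add (hint g) (hint g')]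
        simp only [Pi.add_apply, mul_add]
      map_smul' c g := by
        rw [integral_kernel_mul_congr (Lp.coeFn_smul c g), RingHom.id_apply, smul_eq_mul,
          ← integral_const_mul]
        simp only [Pi.smul_apply, smul_eq_mul, mul_left_comm] }
  have hbound (g : Lp ℝ 1 ν) : ‖L₀ g‖ ≤ (∫ s, w s ∂μ) * ‖g‖ := by
    rw [L1.norm_eq_integral_norm, ← integral_prod_mul]
    exact norm_integral_le_of_norm_le (hw.mul_prod (L1.integrable_coeFn g).norm)
      (ae_norm_kernel_mul_le hkw g)
  exact ⟨L₀.mkContinuous _ hbound, fun g =>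
    (integral_integral (f := fun s ξ => k (s, ξ) * g ξ) (hint g)).symm⟩

end KernelFunctional

lemma Measurable.intervalIntegrable_of_le_of_le {F : ℝ → ℝ} (hF : Measurable F) {m M : ℝ}
    (hm : ∀ x, m ≤ F x) (hM : ∀ x, F x ≤ M) (a b : ℝ) : IntervalIntegrable F volume a b :=
  intervalIntegrable_iff.2 <| IntegrableOn.of_bound measure_Ioc_lt_top hF.aestronglyMeasurable
    (|m| + |M|) <| ae_of_all _ fun x =>
      abs_le.2 ⟨by linarith [hm x, neg_abs_le m, abs_nonneg M],
        by linarith [hM x, le_abs_self M, abs_nonneg m]⟩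

lemma continuous_intervalIntegral_prod {F : ℝ → ℝ}
    (hF : ∀ a b, IntervalIntegrable F volume a b) :
    Continuous fun p : ℝ × ℝ => ∫ u in p.1..p.2, F u := by
  have hG := intervalIntegral.continuous_primitive hF 0
  have h (p : ℝ × ℝ) : ∫ u in p.1..p.2, F u = (∫ u in 0..p.2, F u) - ∫ u in 0..p.1, F u :=
    (intervalIntegral.integral_interval_sub_left (hF 0 _) (hF 0 _)).symm
  simp only [h]
  exact (hG.comp continuous_snd).sub (hG.comp continuous_fst)

section SurvivalKernel

variable {c B : ℝ} {β F : ℝ → ℝ}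

lemma exp_neg_intervalIntegral_le {a s : ℝ} (hF : IntervalIntegrable F volume a (a + s))
    (hs : 0 ≤ s) (hFc : ∀ u, c ≤ F u) : exp (-∫ u in a..a + s, F u) ≤ exp (-c * s) := by
  have h := intervalIntegral.integral_mono_on (by linarith) intervalIntegrable_const hF
    fun u _ => hFc u
  rw [intervalIntegral.integral_const, smul_eq_mul, add_sub_cancel_left] at h
  rw [exp_le_exp]
  linarith

lemma abs_mul_exp_neg_intervalIntegral_le (hβ0 : ∀ a, 0 ≤ β a) (hβB : ∀ a, β a ≤ B)
    (hF : ∀ a b, IntervalIntegrable F volume a b) (hFc : ∀ u, c ≤ F u) (x y : ℝ) {s : ℝ}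
    (hs : 0 ≤ s) : |β x * exp (-∫ u in y..y + s, F u)| ≤ B * exp (-c * s) := by
  rw [abs_of_nonneg (mul_nonneg (hβ0 x) (exp_nonneg _))]
  exact mul_le_mul (hβB x) (exp_neg_intervalIntegral_le (hF _ _) hs hFc) (exp_nonneg _)
    ((hβ0 x).trans (hβB x))

lemma integrableOn_Ioi_mul_exp_neg_intervalIntegral (hβm : Measurable β) (hβ0 : ∀ a, 0 ≤ β a)
    (hβB : ∀ a, β a ≤ B) (hF : ∀ a b, IntervalIntegrable F volume a b) (hFc : ∀ u, c ≤ F u)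
    (hc : 0 < c) : IntegrableOn (fun a => β a * exp (-∫ u in (0 : ℝ)..a, F u)) (Ioi 0) := by
  refine ((exp_neg_integrableOn_Ioi 0 hc).const_mul B).mono'
    (hβm.mul (intervalIntegral.continuous_primitive hF 0).measurable.neg.exp).aestronglyMeasurable
    ?_
  filter_upwards [ae_restrict_mem measurableSet_Ioi] with a ha
  simpa using abs_mul_exp_neg_intervalIntegral_le hβ0 hβB hF hFc a 0 (le_of_lt ha)

lemma exists_clm_eq_integral_survival_kernel (hβm : Measurable β) (hβ0 : ∀ a, 0 ≤ β a)
    (hβB : ∀ a, β a ≤ B) (hF : ∀ a b, IntervalIntegrable F volume a b) (hFc : ∀ u, c ≤ F u)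
    (hc : 0 < c) :
    ∃ L : Lp ℝ 1 (volume.restrict (Ioi (0 : ℝ))) →L[ℝ] ℝ, ∀ g,
      L g = ∫ s in Ioi 0, ∫ ξ in Ioi 0, β (ξ + s) * g ξ * exp (-∫ u in ξ..ξ + s, F u) := by
  have hk : Measurable fun p : ℝ × ℝ => β (p.2 + p.1) * exp (-∫ u in p.2..p.2 + p.1, F u) :=
    (hβm.comp (measurable_snd.add measurable_fst)).mul
      ((continuous_intervalIntegral_prod hF).measurable.comp
        (measurable_snd.prodMk (measurable_snd.add measurable_fst))).neg.exp
  have hkw : ∀ᵐ s ∂(volume.restrict (Ioi (0 : ℝ))), ∀ ξ,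
      |β (ξ + s) * exp (-∫ u in ξ..ξ + s, F u)| ≤ B * exp (-c * s) := by
    filter_upwards [ae_restrict_mem measurableSet_Ioi] with s hs ξ
    exact abs_mul_exp_neg_intervalIntegral_le hβ0 hβB hF hFc _ _ (le_of_lt hs)
  obtain ⟨L, hL⟩ := exists_clm_eq_integral_kernel_mul (ν := volume.restrict (Ioi 0))
    hk.aestronglyMeasurable ((exp_neg_integrableOn_Ioi 0 hc).const_mul B) hkw
  refine ⟨L, fun g => (hL g).trans ?_⟩
  simp_rw [mul_right_comm (β _)]

end SurvivalKernel

theorem next_generation_operator_spectral_radius_general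
    (Λh μv μ0 : ℝ)
    (μh δ r1 βh βv : ℝ → ℝ)
    (hμ0 : 0 < μ0)
    (hμhm : Measurable μh) (hδm : Measurable δ) (hr1m : Measurable r1)
    (hβhm : Measurable βh) (hβvm : Measurable βv)
    (hμh_lb : ∀ a, μ0 ≤ μh a)
    (hδ0 : ∀ a, 0 ≤ δ a) (hr10 : ∀ a, 0 ≤ r1 a)
    (hβh0 : ∀ a, 0 ≤ βh a) (hβv0 : ∀ a, 0 ≤ βv a)
    (Bμh Bδ Br1 Bβh Bβv : ℝ)
    (hμhB : ∀ a, μh a ≤ Bμh) (hδB : ∀ a, δ a ≤ Bδ) (hr1B : ∀ a, r1 a ≤ Br1)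
    (hβhB : ∀ a, βh a ≤ Bβh) (hβvB : ∀ a, βv a ≤ Bβv)
    (sh0 : ℝ → ℝ) (hsh0 : ∀ a, sh0 a = Λh * exp (-(∫ u in (0:ℝ)..a, μh u)))
    (Sv0 : ℝ)
    (R0 : ℝ)
    (hR0 : R0 = Real.sqrt ((Sv0 / μv) * ∫ s in Ioi (0:ℝ), ∫ ξ in Ioi (0:ℝ),
      βh (ξ+s) * βv ξ * sh0 ξ * exp (-(∫ u in ξ..(ξ+s), (μh u + r1 u + δ u))))) :
    ∃ K : (Lp ℝ 1 (volume.restrict (Ioi (0:ℝ))) × ℝ) →L[ℝ]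
          (Lp ℝ 1 (volume.restrict (Ioi (0:ℝ))) × ℝ),
      (∀ B : Lp ℝ 1 (volume.restrict (Ioi (0:ℝ))) × ℝ,
        (⇑((K B).1) =ᵐ[volume.restrict (Ioi (0:ℝ))]
          fun a => βv a * sh0 a * B.2 / μv) ∧
        (K B).2 = Sv0 * ∫ s in Ioi (0:ℝ), ∫ ξ in Ioi (0:ℝ),
          βh (ξ+s) * (B.1 : ℝ → ℝ) ξ * exp (-(∫ u in ξ..(ξ+s), (μh u + δ u + r1 u)))) ∧
      IsCompactOperator K ∧
      spectralRadius ℝ K = ENNReal.ofReal R0 := by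
  have hμhI := hμhm.intervalIntegrable_of_le_of_le hμh_lb hμhB
  have hFI (a b : ℝ) : IntervalIntegrable (fun u => μh u + δ u + r1 u) volume a b :=
    ((hμhI a b).add (hδm.intervalIntegrable_of_le_of_le hδ0 hδB a b)).add
      (hr1m.intervalIntegrable_of_le_of_le hr10 hr1B a b)
  obtain ⟨L, hL⟩ := exists_clm_eq_integral_survival_kernel hβhm hβh0 hβhB hFI
    (fun u => by linarith [hμh_lb u, hδ0 u, hr10 u]) hμ0
  have hf₀ : Integrable (fun a => βv a * sh0 a / μv) (volume.restrict (Ioi 0)) := by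
    have h := (integrableOn_Ioi_mul_exp_neg_intervalIntegral hβvm hβv0 hβvB hμhI hμh_lb
      hμ0).const_mul (Λh / μv)
    refine h.congr (ae_of_all _ fun a => ?_)
    simp only [hsh0]
    ring
  set f := (memLp_one_iff_integrable.2 hf₀).toLp _
  have hf : ⇑f =ᵐ[volume.restrict (Ioi 0)] fun a => βv a * sh0 a / μv := MemLp.coeFn_toLp _
  have hLf : (Sv0 • L) f = Sv0 / μv * ∫ s in Ioi (0:ℝ), ∫ ξ in Ioi (0:ℝ),
      βh (ξ+s) * βv ξ * sh0 ξ * exp (-(∫ u in ξ..(ξ+s), (μh u + r1 u + δ u))) := by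
    rw [smul_apply, hL, smul_eq_mul, div_mul_eq_mul_div, mul_div_assoc, ← integral_div]
    congr 1
    refine integral_congr_ae (ae_of_all _ fun s => ?_)
    dsimp only
    rw [← integral_div]
    refine integral_congr_ae (hf.mono fun ξ hξ => ?_)
    simp only [hξ, add_right_comm _ (r1 _)]
    ring
  refine ⟨.antidiag f (Sv0 • L), fun B => ⟨?_, ?_⟩,
    ContinuousLinearMap.isCompactOperator_antidiag _ _, ?_⟩
  · filter_upwards [Lp.coeFn_smul B.2 f, hf] with a hsmul hfa
    simp only [ContinuousLinearMap.antidiag_apply, hsmul, Pi.smul_apply, hfa, smul_eq_mul]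
    ring
  · simp [hL]
  · rw [ContinuousLinearMap.spectralRadius_antidiag, hLf, hR0]

/-- The next generation operator `K` of the age-structured SIRS/SI malaria model is a
well-defined bounded compact operator on `L¹(0,∞) × ℝ`, whose spectral radius equals
the basic reproduction number `R₀`. -/
theorem next_generation_operator_spectral_radius
    (Λh Λv μv μ0 : ℝ)
    (μh δ r1 r2 βh βv : ℝ → ℝ)
    (hΛh : 0 < Λh) (hΛv : 0 < Λv) (hμv : 0 < μv) (hμ0 : 0 < μ0)
    (hμhm : Measurable μh) (hδm : Measurable δ) (hr1m : Measurable r1)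
    (hr2m : Measurable r2) (hβhm : Measurable βh) (hβvm : Measurable βv)
    (hμh_lb : ∀ a, μ0 ≤ μh a) (hμv_lb : μ0 ≤ μv)
    (hδ0 : ∀ a, 0 ≤ δ a) (hr10 : ∀ a, 0 ≤ r1 a) (hr20 : ∀ a, 0 ≤ r2 a)
    (hβh0 : ∀ a, 0 ≤ βh a) (hβv0 : ∀ a, 0 ≤ βv a)
    (Bμh Bδ Br1 Br2 Bβh Bβv : ℝ)
    (hμhB : ∀ a, μh a ≤ Bμh) (hδB : ∀ a, δ a ≤ Bδ) (hr1B : ∀ a, r1 a ≤ Br1)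
    (hr2B : ∀ a, r2 a ≤ Br2) (hβhB : ∀ a, βh a ≤ Bβh) (hβvB : ∀ a, βv a ≤ Bβv)
    (hirr : 0 < ∫ a in Ioi (0:ℝ), ∫ s in Ioi (0:ℝ), βh (a+s) * βv a * exp (-μ0 * (a+s)))
    (sh0 : ℝ → ℝ) (hsh0 : ∀ a, sh0 a = Λh * exp (-(∫ u in (0:ℝ)..a, μh u)))
    (Sv0 : ℝ) (hSv0def : Sv0 = Λv / μv)
    (R0 : ℝ)
    (hR0 : R0 = Real.sqrt ((Sv0 / μv) * ∫ s in Ioi (0:ℝ), ∫ ξ in Ioi (0:ℝ),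
      βh (ξ+s) * βv ξ * sh0 ξ * exp (-(∫ u in ξ..(ξ+s), (μh u + r1 u + δ u))))) :
    ∃ K : (Lp ℝ 1 (volume.restrict (Ioi (0:ℝ))) × ℝ) →L[ℝ]
          (Lp ℝ 1 (volume.restrict (Ioi (0:ℝ))) × ℝ),
      (∀ B : Lp ℝ 1 (volume.restrict (Ioi (0:ℝ))) × ℝ,
        (⇑((K B).1) =ᵐ[volume.restrict (Ioi (0:ℝ))]
          fun a => βv a * sh0 a * B.2 / μv) ∧
        (K B).2 = Sv0 * ∫ s in Ioi (0:ℝ), ∫ ξ in Ioi (0:ℝ),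
          βh (ξ+s) * (B.1 : ℝ → ℝ) ξ * exp (-(∫ u in ξ..(ξ+s), (μh u + δ u + r1 u)))) ∧
      IsCompactOperator K ∧
      spectralRadius ℝ K = ENNReal.ofReal R0 :=
  next_generation_operator_spectral_radius_general Λh μv μ0 μh δ r1 βh βv hμ0 hμhm hδm hr1m hβhm
    hβvm hμh_lb hδ0 hr10 hβh0 hβv0 Bμh Bδ Br1 Bβh Bβv hμhB hδB hr1B hβhB hβvB sh0 hsh0 Sv0 R0 hR0
end

section
/- Let F_1 : L^1(0,∞) → L^1(0,∞) be the continuous linear operator defined by F_1(B)(a) = β_v(a)·s_h^0(a)·(S_v^0/μ_v)·∫_0^∞ ∫_0^∞ β_h(ξ+s)·B(ξ)·exp(-∫_ξ^{ξ+s}(μ_h(u)+r_1(u)+δ(u))du) dξ ds. Then F_1 is well defined and bounded, the function a ↦ β_v(a)·s_h^0(a) is an eigenfunction of F_1 with eigenvalue R_0², and the spectral radius of F_1 equals R_0². -/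
/-!
`F₁` has rank one: by Fubini, `F₁ B = ℓ(B) • φ` with `φ = β_v s_h⁰ ∈ L¹` and `ℓ` the pairing of
`B` with the bounded kernel `ξ ↦ (S_v⁰/μ_v) ∫ β_h(ξ+s) e^{-∫_ξ^{ξ+s}(μ_h+r_1+δ)} ds`, so that
`ℓ(φ) = R₀²` is the eigenvalue of `φ`. A rank-one operator `T = ℓ ⊗ φ` satisfies `T² = ℓ(φ) T`, so
its spectrum lies in `{0, ℓ(φ)}` and its spectral radius is `|ℓ(φ)|`.
-/

open MeasureTheory Real Set
open scoped ENNReal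

theorem spectrum_subset_of_mul_self_eq_smul {𝕜 A : Type*} [Field 𝕜] [Ring A] [Algebra 𝕜 A]
    {a : A} {c : 𝕜} (h : a * a = c • a) :
    spectrum 𝕜 a ⊆ {0, c} := by
  cases subsingleton_or_nontrivial A
  · simp [spectrum.of_subsingleton]
  intro k hk
  have hp := spectrum.subset_polynomial_aeval a
    (Polynomial.X ^ 2 - Polynomial.C c * Polynomial.X) ⟨k, hk, rfl⟩
  have haeval : Polynomial.aeval a (Polynomial.X ^ 2 - Polynomial.C c * Polynomial.X) = 0 := by
    simp [sq, h, Algebra.smul_def]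
  rw [haeval, spectrum.zero_eq] at hp
  simp only [Polynomial.eval_sub, Polynomial.eval_mul, Polynomial.eval_X, Polynomial.eval_C,
    mem_singleton_iff, sq, ← sub_mul, mul_eq_zero, sub_eq_zero] at hp
  simp only [mem_insert_iff, mem_singleton_iff]
  tauto

theorem spectralRadius_eq_of_mul_self_eq_smul {𝕜 A : Type*} [NormedField 𝕜] [Ring A]
    [Algebra 𝕜 A] {a : A} {c : 𝕜} (h : a * a = c • a)
    (hc : c ∈ spectrum 𝕜 a) : spectralRadius 𝕜 a = ‖c‖₊ := by
  refine le_antisymm (iSup₂_le fun k hk => ?_)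
    (le_iSup₂ (f := fun k _ => (‖k‖₊ : ℝ≥0∞)) c hc)
  rcases spectrum_subset_of_mul_self_eq_smul h hk with rfl | rfl <;> simp

namespace ContinuousLinearMap

variable {𝕜 E : Type*} [NormedField 𝕜] [NormedAddCommGroup E] [NormedSpace 𝕜 E]

theorem mem_spectrum_of_apply_eq_smul {T : E →L[𝕜] E} {c : 𝕜} {φ : E} (hφ : φ ≠ 0)
    (h : T φ = c • φ) : c ∈ spectrum 𝕜 T := by
  intro hunit
  exact hφ <| (isHomeomorph_of_isUnit hunit).injective <| by
    simp [h, Algebra.algebraMap_eq_smul_one]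

theorem spectralRadius_smulRight (ℓ : StrongDual 𝕜 E) (φ : E) :
    spectralRadius 𝕜 (ℓ.smulRight φ) = ‖ℓ φ‖₊ := by
  rcases eq_or_ne φ 0 with rfl | hφ
  · simp [spectrum.spectralRadius_zero]
  refine spectralRadius_eq_of_mul_self_eq_smul ?_ (mem_spectrum_of_apply_eq_smul hφ rfl)
  ext x
  simp [smul_smul, mul_comm]

end ContinuousLinearMap

section Kernel

variable {α β : Type*} [MeasurableSpace α] [MeasurableSpace β] {μ : Measure α} {ν : Measure β}
  [SFinite μ] [SFinite ν] {k : α → β → ℝ} {w : β → ℝ}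

theorem integral_integral_mul_eq_integral_mul
    (hk : AEStronglyMeasurable (Function.uncurry k) (μ.prod ν)) (hw : Integrable w ν)
    (hkw : ∀ᵐ y ∂ν, ∀ x, ‖k x y‖ ≤ w y) {f : α → ℝ} (hf : Integrable f μ) :
    ∫ y, ∫ x, k x y * f x ∂μ ∂ν = ∫ x, (∫ y, k x y ∂ν) * f x ∂μ := by
  have hint : Integrable (fun z : α × β => k z.1 z.2 * f z.1) (μ.prod ν) := by
    refine (hf.norm.mul_prod hw).mono (hk.mul (hf.aestronglyMeasurable.comp_quasiMeasurePreserving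
      Measure.quasiMeasurePreserving_fst)) ?_
    filter_upwards [Measure.quasiMeasurePreserving_snd.ae hkw] with z hz
    rw [norm_mul, norm_mul, norm_norm, mul_comm]
    exact mul_le_mul_of_nonneg_left ((hz z.1).trans (le_abs_self _)) (norm_nonneg _)
  rw [← integral_integral_swap hint]
  simp_rw [integral_mul_const]

theorem exists_strongDual_L1_eq_integral_integral_mul
    (hk : AEStronglyMeasurable (Function.uncurry k) (μ.prod ν)) (hw : Integrable w ν)
    (hkw : ∀ᵐ y ∂ν, ∀ x, ‖k x y‖ ≤ w y) :
    ∃ ℓ : StrongDual ℝ (Lp ℝ 1 μ), ∀ f : Lp ℝ 1 μ, ℓ f = ∫ y, ∫ x, k x y * f x ∂μ ∂ν := by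
  have hK : MemLp (fun x => ∫ y, k x y ∂ν) ∞ μ :=
    memLp_top_of_bound hk.integral_prod_right' (∫ y, w y ∂ν)
      (ae_of_all _ fun x => norm_integral_le_of_norm_le hw (hkw.mono fun y hy => hy x))
  refine ⟨(ContinuousLinearMap.mul ℝ ℝ).lpPairing μ ∞ 1 hK.toLp, fun f => ?_⟩
  rw [ContinuousLinearMap.lpPairing_eq_integral,
    integral_integral_mul_eq_integral_mul hk hw hkw (L1.integrable_coeFn f)]
  exact integral_congr_ae (hK.coeFn_toLp.mono fun x hx => by simp [hx])

end Kernel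

theorem locallyIntegrable_of_nonneg_of_le {X : Type*} [MeasurableSpace X] [TopologicalSpace X]
    {μ : Measure X} [IsLocallyFiniteMeasure μ] {f : X → ℝ} {C : ℝ} (hf : Measurable f)
    (hf0 : ∀ x, 0 ≤ f x) (hfC : ∀ x, f x ≤ C) : LocallyIntegrable f μ :=
  (locallyIntegrable_const C).mono hf.aestronglyMeasurable <| ae_of_all _ fun x => by
    rw [norm_of_nonneg (hf0 x), norm_of_nonneg ((hf0 x).trans (hfC x))]
    exact hfC x

theorem MeasureTheory.LocallyIntegrable.continuous_intervalIntegral {E : Type*}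
    [NormedAddCommGroup E] [NormedSpace ℝ E] {f : ℝ → E} (hf : LocallyIntegrable f) :
    Continuous fun z : ℝ × ℝ => ∫ u in z.1..z.2, f u := by
  have hii (a b : ℝ) : IntervalIntegrable f volume a b :=
    (hf.integrableOn_isCompact isCompact_uIcc).intervalIntegrable
  have hsub : (fun z : ℝ × ℝ => ∫ u in z.1..z.2, f u)
      = fun z => (∫ u in (0:ℝ)..z.2, f u) - ∫ u in (0:ℝ)..z.1, f u :=
    funext fun z => (intervalIntegral.integral_interval_sub_left (hii 0 z.2) (hii 0 z.1)).symm
  rw [hsub]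
  exact ((intervalIntegral.continuous_primitive hii 0).comp continuous_snd).sub
    ((intervalIntegral.continuous_primitive hii 0).comp continuous_fst)

section Survival

variable {f g : ℝ → ℝ} {B μ0 : ℝ}

theorem exp_neg_intervalIntegral_add_le {ξ s : ℝ} (hg : LocallyIntegrable g)
    (hg_lb : ∀ u, μ0 ≤ g u) (hs : 0 ≤ s) :
    exp (-(∫ u in ξ..ξ + s, g u)) ≤ exp (-μ0 * s) := by
  have hmono := intervalIntegral.integral_mono_on (le_add_of_nonneg_right hs : ξ ≤ ξ + s)
    intervalIntegrable_const ((hg.integrableOn_isCompact isCompact_uIcc).intervalIntegrable)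
    fun u _ => hg_lb u
  simp only [intervalIntegral.integral_const, add_sub_cancel_left, smul_eq_mul] at hmono
  rw [neg_mul]
  gcongr
  linarith

theorem measurable_uncurry_mul_exp_neg_intervalIntegral (hf : Measurable f)
    (hg : LocallyIntegrable g) :
    Measurable (Function.uncurry fun ξ s => f (ξ + s) * exp (-(∫ u in ξ..ξ + s, g u))) :=
  (hf.comp measurable_add).mul (continuous_exp.comp (hg.continuous_intervalIntegral.comp
    (continuous_fst.prodMk (continuous_fst.add continuous_snd))).neg).measurable

theorem exists_strongDual_L1_eq_integral_integral_mul_exp_neg_intervalIntegral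
    (hf : Measurable f) (hf0 : ∀ a, 0 ≤ f a) (hfB : ∀ a, f a ≤ B)
    (hg : LocallyIntegrable g) (hg_lb : ∀ u, μ0 ≤ g u) (hμ0 : 0 < μ0) :
    ∃ ℓ : StrongDual ℝ (Lp ℝ 1 (volume.restrict (Ioi (0:ℝ)))), ∀ φ, ℓ φ =
      ∫ s in Ioi (0:ℝ), ∫ ξ in Ioi (0:ℝ), f (ξ + s) * φ ξ * exp (-(∫ u in ξ..ξ + s, g u)) := by
  have hbound : ∀ᵐ s ∂volume.restrict (Ioi 0), ∀ ξ,
      ‖f (ξ + s) * exp (-(∫ u in ξ..ξ + s, g u))‖ ≤ B * exp (-μ0 * s) := by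
    filter_upwards [ae_restrict_mem measurableSet_Ioi] with s hs ξ
    rw [norm_mul, norm_of_nonneg (hf0 _), norm_of_nonneg (exp_pos _).le]
    exact mul_le_mul (hfB _) (exp_neg_intervalIntegral_add_le hg hg_lb (le_of_lt hs))
      (exp_pos _).le ((hf0 0).trans (hfB 0))
  obtain ⟨ℓ, hℓ⟩ := exists_strongDual_L1_eq_integral_integral_mul (μ := volume.restrict (Ioi 0))
    (measurable_uncurry_mul_exp_neg_intervalIntegral hf hg).aestronglyMeasurable
    ((exp_neg_integrableOn_Ioi 0 hμ0).const_mul B) hbound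
  exact ⟨ℓ, fun φ => by simp only [hℓ, mul_right_comm _ (φ _)]⟩

theorem integrableOn_Ioi_mul_exp_neg_intervalIntegral_s5 {Λ : ℝ} (hf : Measurable f)
    (hf0 : ∀ a, 0 ≤ f a) (hfB : ∀ a, f a ≤ B) (hg : LocallyIntegrable g)
    (hg_lb : ∀ u, μ0 ≤ g u) (hμ0 : 0 < μ0) (hΛ : 0 ≤ Λ) :
    IntegrableOn (fun a => f a * (Λ * exp (-(∫ u in (0:ℝ)..a, g u)))) (Ioi 0) := by
  refine ((exp_neg_integrableOn_Ioi 0 hμ0).const_mul (B * Λ)).mono' ?_ ?_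
  · exact (hf.mul (measurable_const.mul (continuous_exp.comp (hg.continuous_intervalIntegral.comp
      (continuous_const.prodMk continuous_id)).neg).measurable)).aestronglyMeasurable
  filter_upwards [ae_restrict_mem measurableSet_Ioi] with a ha
  have hexp := exp_neg_intervalIntegral_add_le (ξ := 0) hg hg_lb (le_of_lt ha)
  rw [zero_add] at hexp
  rw [norm_mul, norm_mul, norm_of_nonneg (hf0 _), norm_of_nonneg hΛ,
    norm_of_nonneg (exp_pos _).le, mul_assoc]
  gcongr
  · exact (hf0 0).trans (hfB 0)
  · exact hfB a

end Survival

theorem F1_eigenvalue_and_spectral_radius_general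
    (Λh Λv μv μ0 : ℝ)
    (μh δ r1 βh βv : ℝ → ℝ)
    (hΛh : 0 < Λh) (hΛv : 0 < Λv) (hμv : 0 < μv) (hμ0 : 0 < μ0)
    (hμhm : Measurable μh) (hδm : Measurable δ) (hr1m : Measurable r1)
    (hβhm : Measurable βh) (hβvm : Measurable βv)
    (hμh_lb : ∀ a, μ0 ≤ μh a)
    (hδ0 : ∀ a, 0 ≤ δ a) (hr10 : ∀ a, 0 ≤ r1 a)
    (hβh0 : ∀ a, 0 ≤ βh a) (hβv0 : ∀ a, 0 ≤ βv a)
    (Bμh Bδ Br1 Bβh Bβv : ℝ)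
    (hμhB : ∀ a, μh a ≤ Bμh) (hδB : ∀ a, δ a ≤ Bδ) (hr1B : ∀ a, r1 a ≤ Br1)
    (hβhB : ∀ a, βh a ≤ Bβh) (hβvB : ∀ a, βv a ≤ Bβv)
    (sh0 : ℝ → ℝ) (hsh0 : ∀ a, sh0 a = Λh * exp (-(∫ u in (0:ℝ)..a, μh u)))
    (Sv0 : ℝ) (hSv0def : Sv0 = Λv / μv)
    (R0 : ℝ)
    (hR0 : R0 = Real.sqrt ((Sv0 / μv) * ∫ s in Ioi (0:ℝ), ∫ ξ in Ioi (0:ℝ),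
      βh (ξ+s) * βv ξ * sh0 ξ * exp (-(∫ u in ξ..(ξ+s), (μh u + r1 u + δ u))))) :
    ∃ F1 : Lp ℝ 1 (volume.restrict (Ioi (0:ℝ))) →L[ℝ]
           Lp ℝ 1 (volume.restrict (Ioi (0:ℝ))),
      (∀ B : Lp ℝ 1 (volume.restrict (Ioi (0:ℝ))),
        ⇑(F1 B) =ᵐ[volume.restrict (Ioi (0:ℝ))]
          fun a => βv a * sh0 a * ((Sv0 / μv) * ∫ s in Ioi (0:ℝ), ∫ ξ in Ioi (0:ℝ),
            βh (ξ+s) * (B : ℝ → ℝ) ξ * exp (-(∫ u in ξ..(ξ+s), (μh u + r1 u + δ u))))) ∧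
      (∃ φ : Lp ℝ 1 (volume.restrict (Ioi (0:ℝ))),
        (⇑φ =ᵐ[volume.restrict (Ioi (0:ℝ))] fun a => βv a * sh0 a) ∧
        F1 φ = (R0 ^ 2) • φ) ∧
      spectralRadius ℝ F1 = ENNReal.ofReal (R0 ^ 2) := by
  obtain rfl : sh0 = fun a => Λh * exp (-(∫ u in (0:ℝ)..a, μh u)) := funext hsh0
  have hμh : LocallyIntegrable μh :=
    locallyIntegrable_of_nonneg_of_le hμhm (fun a => hμ0.le.trans (hμh_lb a)) hμhB
  have hg : LocallyIntegrable fun u => μh u + r1 u + δ u :=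
    (hμh.add (locallyIntegrable_of_nonneg_of_le hr1m hr10 hr1B)).add
      (locallyIntegrable_of_nonneg_of_le hδm hδ0 hδB)
  obtain ⟨ℓ, hℓ⟩ := exists_strongDual_L1_eq_integral_integral_mul_exp_neg_intervalIntegral
    hβhm hβh0 hβhB hg (fun u => by linarith [hμh_lb u, hr10 u, hδ0 u]) hμ0
  have hφ : MemLp (fun a => βv a * (Λh * exp (-(∫ u in (0:ℝ)..a, μh u)))) 1
      (volume.restrict (Ioi 0)) := memLp_one_iff_integrable.2 <|
    integrableOn_Ioi_mul_exp_neg_intervalIntegral_s5 hβvm hβv0 hβvB hμh hμh_lb hμ0 hΛh.le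
  have hℓφ : ((Sv0 / μv) • ℓ) hφ.toLp = R0 ^ 2 := by
    rw [hR0, sq_sqrt, smul_apply, hℓ, smul_eq_mul]
    · congr 1
      refine integral_congr_ae (ae_of_all _ fun s => integral_congr_ae ?_)
      filter_upwards [hφ.coeFn_toLp] with ξ hξ
      rw [hξ]
      ring
    refine mul_nonneg (by rw [hSv0def]; positivity)
      (integral_nonneg fun s => integral_nonneg fun ξ => ?_)
    have := hβh0 (ξ + s)
    have := hβv0 ξ
    positivity
  refine ⟨((Sv0 / μv) • ℓ).smulRight hφ.toLp, fun B => ?_,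
    ⟨hφ.toLp, hφ.coeFn_toLp, by simp [hℓφ]⟩, ?_⟩
  · filter_upwards [Lp.coeFn_smul (((Sv0 / μv) • ℓ) B) hφ.toLp, hφ.coeFn_toLp] with a h1 h2
    rw [ContinuousLinearMap.smulRight_apply, h1, Pi.smul_apply, h2, smul_eq_mul, mul_comm,
      smul_apply, hℓ, smul_eq_mul]
  · rw [ContinuousLinearMap.spectralRadius_smulRight, hℓφ, ← enorm_eq_nnnorm,
      Real.enorm_of_nonneg (sq_nonneg R0)]

/-- The human-to-human block `F₁` of the square of the next generation operator of the
age-structured SIRS/SI malaria model is a bounded operator on `L¹(0,∞)`, has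
`a ↦ β_v(a)·s_h⁰(a)` as eigenfunction with eigenvalue `R₀²`, and its spectral radius
equals `R₀²`. -/
theorem F1_eigenvalue_and_spectral_radius
    (Λh Λv μv μ0 : ℝ)
    (μh δ r1 r2 βh βv : ℝ → ℝ)
    (hΛh : 0 < Λh) (hΛv : 0 < Λv) (hμv : 0 < μv) (hμ0 : 0 < μ0)
    (hμhm : Measurable μh) (hδm : Measurable δ) (hr1m : Measurable r1)
    (hr2m : Measurable r2) (hβhm : Measurable βh) (hβvm : Measurable βv)
    (hμh_lb : ∀ a, μ0 ≤ μh a) (hμv_lb : μ0 ≤ μv)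
    (hδ0 : ∀ a, 0 ≤ δ a) (hr10 : ∀ a, 0 ≤ r1 a) (hr20 : ∀ a, 0 ≤ r2 a)
    (hβh0 : ∀ a, 0 ≤ βh a) (hβv0 : ∀ a, 0 ≤ βv a)
    (Bμh Bδ Br1 Br2 Bβh Bβv : ℝ)
    (hμhB : ∀ a, μh a ≤ Bμh) (hδB : ∀ a, δ a ≤ Bδ) (hr1B : ∀ a, r1 a ≤ Br1)
    (hr2B : ∀ a, r2 a ≤ Br2) (hβhB : ∀ a, βh a ≤ Bβh) (hβvB : ∀ a, βv a ≤ Bβv)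
    (hirr : 0 < ∫ a in Ioi (0:ℝ), ∫ s in Ioi (0:ℝ), βh (a+s) * βv a * exp (-μ0 * (a+s)))
    (sh0 : ℝ → ℝ) (hsh0 : ∀ a, sh0 a = Λh * exp (-(∫ u in (0:ℝ)..a, μh u)))
    (Sv0 : ℝ) (hSv0def : Sv0 = Λv / μv)
    (R0 : ℝ)
    (hR0 : R0 = Real.sqrt ((Sv0 / μv) * ∫ s in Ioi (0:ℝ), ∫ ξ in Ioi (0:ℝ),
      βh (ξ+s) * βv ξ * sh0 ξ * exp (-(∫ u in ξ..(ξ+s), (μh u + r1 u + δ u))))) :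
    ∃ F1 : Lp ℝ 1 (volume.restrict (Ioi (0:ℝ))) →L[ℝ]
           Lp ℝ 1 (volume.restrict (Ioi (0:ℝ))),
      (∀ B : Lp ℝ 1 (volume.restrict (Ioi (0:ℝ))),
        ⇑(F1 B) =ᵐ[volume.restrict (Ioi (0:ℝ))]
          fun a => βv a * sh0 a * ((Sv0 / μv) * ∫ s in Ioi (0:ℝ), ∫ ξ in Ioi (0:ℝ),
            βh (ξ+s) * (B : ℝ → ℝ) ξ * exp (-(∫ u in ξ..(ξ+s), (μh u + r1 u + δ u))))) ∧
      (∃ φ : Lp ℝ 1 (volume.restrict (Ioi (0:ℝ))),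
        (⇑φ =ᵐ[volume.restrict (Ioi (0:ℝ))] fun a => βv a * sh0 a) ∧
        F1 φ = (R0 ^ 2) • φ) ∧
      spectralRadius ℝ F1 = ENNReal.ofReal (R0 ^ 2) :=
  F1_eigenvalue_and_spectral_radius_general Λh Λv μv μ0 μh δ r1 βh βv hΛh hΛv hμv hμ0 hμhm hδm hr1m
    hβhm hβvm hμh_lb hδ0 hr10 hβh0 hβv0 Bμh Bδ Br1 Bβh Bβv hμhB hδB hr1B hβhB hβvB sh0 hsh0 Sv0
    hSv0def R0 hR0
end

section
/- Define, for real λ ≥ 0, g(λ) = (S_v^0/μ_v)·∫_0^∞ β_h(a)·∫_0^a β_v(s)·s_h^0(s)·exp(-∫_s^a (μ_h(z)+δ(z)+r_1(z)+λ)dz) ds da. Then g is continuous and decreasing on [0,∞), g(0) = R_0², g(λ) → 0 as λ → ∞, and if R_0 > 1 there exists λ > 0 with g(λ) = 1. -/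
/-!
Put `t = a - s` (infection age) and exchange the order of integration: the shear
`(ξ, t) ↦ (ξ, ξ + t)` preserves Lebesgue measure on the plane, so `g` becomes, on `λ ≥ 0`, the
Laplace transform `λ ↦ ∫₀^∞ e^{-λt} φ(t) dt` of the nonnegative function
`φ(t) = (S_v^0/μ_v) ∫₀^∞ β_h(ξ+t) β_v(ξ) s_h^0(ξ) exp(-∫_ξ^{ξ+t} (μ_h+δ+r_1)) dξ`,
whose integral is `R₀²`. Since `μ_h ≥ μ_0`, the integrand decays like
`e^{-μ_0 (ξ+t)}`, so `φ` is integrable. The Laplace transform of a nonnegative integrable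
function is continuous and antitone on `[0, ∞)` and tends to `0` at infinity by dominated
convergence; the root of `g = 1` then comes from the intermediate value theorem.
-/

open MeasureTheory Real Set Filter Topology

theorem norm_exp_neg_mul_le_one {s t : ℝ} (hs : 0 ≤ s) (ht : 0 ≤ t) : ‖exp (-(s * t))‖ ≤ 1 := by
  rw [norm_of_nonneg (exp_pos _).le, exp_le_one_iff]
  nlinarith

theorem exp_neg_intervalIntegral_le_s6 {f : ℝ → ℝ} {a b c : ℝ} (hab : a ≤ b)
    (hf : IntervalIntegrable f volume a b) (hc : ∀ x, c ≤ f x) :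
    exp (-∫ x in a..b, f x) ≤ exp (-(c * (b - a))) := by
  refine exp_le_exp.2 (neg_le_neg ?_)
  simpa [mul_comm] using
    intervalIntegral.integral_mono_on hab intervalIntegrable_const hf fun x _ => hc x

theorem intervalIntegrable_of_norm_le {E : Type*} [NormedAddCommGroup E] {f : ℝ → E} {C : ℝ}
    (hf : AEStronglyMeasurable f) (hC : ∀ x, ‖f x‖ ≤ C) (a b : ℝ) :
    IntervalIntegrable f volume a b :=
  intervalIntegrable_const.mono_fun' hf.restrict (ae_of_all _ hC)

theorem norm_mul_mul_exp_neg_integral_le {b μ : ℝ → ℝ} {B Λ c x : ℝ} (hΛ : 0 ≤ Λ)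
    (hb : ∀ x, ‖b x‖ ≤ B) (hμ : IntervalIntegrable μ volume 0 x) (hμc : ∀ x, c ≤ μ x)
    (hx : 0 ≤ x) : ‖b x * (Λ * exp (-∫ u in 0..x, μ u))‖ ≤ B * Λ * exp (-(c * x)) := by
  rw [norm_mul, norm_of_nonneg (mul_nonneg hΛ (exp_pos _).le), mul_assoc]
  refine mul_le_mul (hb x) (mul_le_mul_of_nonneg_left ?_ hΛ) (by positivity)
    ((norm_nonneg _).trans (hb x))
  simpa using exp_neg_intervalIntegral_le_s6 hx hμ hμc

theorem continuous_intervalIntegral_fst_snd {E : Type*} [NormedAddCommGroup E] [NormedSpace ℝ E]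
    {f : ℝ → E} (hf : ∀ a b, IntervalIntegrable f volume a b) :
    Continuous fun p : ℝ × ℝ => ∫ x in p.1..p.2, f x := by
  have h := intervalIntegral.continuous_primitive hf 0
  refine ((h.comp continuous_snd).sub (h.comp continuous_fst)).congr fun p => ?_
  exact intervalIntegral.integral_interval_sub_left (hf 0 p.2) (hf 0 p.1)

theorem integrableOn_Ioi_prod_Ioi_of_norm_le_exp {E : Type*} [NormedAddCommGroup E]
    {F : ℝ × ℝ → E} {c K : ℝ} (hc : 0 < c) (hF : AEStronglyMeasurable F)
    (hFK : ∀ x y, 0 < x → 0 < y → ‖F (x, y)‖ ≤ K * exp (-(c * (x + y)))) :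
    IntegrableOn F (Ioi 0 ×ˢ Ioi 0) := by
  have hexp : IntegrableOn (fun x => exp (-(c * x))) (Ioi 0) := by
    simpa [neg_mul] using exp_neg_integrableOn_Ioi 0 hc
  have hdom : IntegrableOn (fun p : ℝ × ℝ => K * (exp (-(c * p.1)) * exp (-(c * p.2))))
      (Ioi 0 ×ˢ Ioi 0) := by
    rw [IntegrableOn, Measure.volume_eq_prod, ← Measure.prod_restrict]
    exact (hexp.mul_prod hexp).const_mul K
  refine hdom.mono' hF.restrict ((ae_restrict_iff' (measurableSet_Ioi.prod measurableSet_Ioi)).2 <|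
    ae_of_all _ fun p hp => ?_)
  rw [← exp_add, ← neg_add, ← mul_add]
  exact hFK p.1 p.2 hp.1 hp.2

theorem integral_Ioi_intervalIntegral_eq_integral_Ioi_integral_Ioi {E : Type*}
    [NormedAddCommGroup E] [NormedSpace ℝ E] (f : ℝ → ℝ → E)
    (hf : IntegrableOn (fun p : ℝ × ℝ => f p.1 (p.1 + p.2)) (Ioi 0 ×ˢ Ioi 0)) :
    ∫ a in Ioi 0, ∫ s in 0..a, f s a = ∫ t in Ioi 0, ∫ ξ in Ioi 0, f ξ (ξ + t) := by
  set H : ℝ × ℝ → E := {p | 0 < p.1 ∧ p.1 < p.2}.indicator fun p => f p.1 p.2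
  have hshear : MeasurePreserving (MeasurableEquiv.shearAddRight ℝ) (volume.prod volume)
      (volume.prod volume) := measurePreserving_prod_add volume volume
  have hshear_indicator : (Ioi 0 ×ˢ Ioi 0).indicator (fun p : ℝ × ℝ => f p.1 (p.1 + p.2)) =
      H ∘ MeasurableEquiv.shearAddRight ℝ := by
    ext ⟨ξ, t⟩
    simp [H, indicator, MeasurableEquiv.shearAddRight]
  have hH : Integrable H (volume.prod volume) := by
    rw [← hshear.integrable_comp_emb (MeasurableEquiv.measurableEmbedding _), ← hshear_indicator]
    exact (integrable_indicator_iff (measurableSet_Ioi.prod measurableSet_Ioi)).2 hf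
  have hleft : ∀ a, ∫ ξ, H (ξ, a) = (Ioi 0).indicator (fun a => ∫ s in 0..a, f s a) a := by
    intro a
    change ∫ ξ, (Ioo 0 a).indicator (fun ξ => f ξ a) ξ = _
    rw [integral_indicator measurableSet_Ioo]
    rcases lt_or_ge 0 a with ha | ha
    · rw [indicator_of_mem (mem_Ioi.2 ha), intervalIntegral.integral_of_le ha.le,
        integral_Ioc_eq_integral_Ioo]
    · rw [indicator_of_notMem (notMem_Ioi.2 ha), Ioo_eq_empty (not_lt.2 ha),
        Measure.restrict_empty, integral_zero_measure]
  have hright : ∀ t, ∫ ξ, H (MeasurableEquiv.shearAddRight ℝ (ξ, t)) =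
      (Ioi 0).indicator (fun t => ∫ ξ in Ioi 0, f ξ (ξ + t)) t := by
    intro t
    change ∫ ξ, (H ∘ MeasurableEquiv.shearAddRight ℝ) (ξ, t) = _
    rw [← hshear_indicator]
    rcases lt_or_ge 0 t with ht | ht
    · simp [indicator, ht, ← integral_indicator measurableSet_Ioi]
    · simp [indicator, not_lt.2 ht]
  calc ∫ a in Ioi 0, ∫ s in 0..a, f s a = ∫ a, ∫ ξ, H (ξ, a) := by
        simp_rw [hleft, integral_indicator measurableSet_Ioi]
    _ = ∫ p, H p ∂(volume.prod volume) := (integral_prod_symm H hH).symm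
    _ = ∫ p, H (MeasurableEquiv.shearAddRight ℝ p) ∂(volume.prod volume) :=
        (hshear.integral_comp' H).symm
    _ = ∫ t, ∫ ξ, H (MeasurableEquiv.shearAddRight ℝ (ξ, t)) := integral_prod_symm _
        ((hshear.integrable_comp_emb (MeasurableEquiv.measurableEmbedding _)).2 hH)
    _ = ∫ t in Ioi 0, ∫ ξ in Ioi 0, f ξ (ξ + t) := by
        simp_rw [hright, integral_indicator measurableSet_Ioi]

noncomputable def laplaceTransform (φ : ℝ → ℝ) (s : ℝ) : ℝ :=
  ∫ t in Ioi 0, exp (-(s * t)) * φ t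

namespace laplaceTransform

variable {φ : ℝ → ℝ}

theorem const_mul (c s : ℝ) :
    laplaceTransform (fun t => c * φ t) s = c * laplaceTransform φ s := by
  simp_rw [laplaceTransform, mul_left_comm _ c, integral_const_mul]

theorem zero_eq : laplaceTransform φ 0 = ∫ t in Ioi 0, φ t := by
  simp [laplaceTransform]

theorem norm_integrand_le {s t : ℝ} (hs : 0 ≤ s) (ht : 0 < t) :
    ‖exp (-(s * t)) * φ t‖ ≤ ‖φ t‖ := by
  rw [norm_mul]
  exact mul_le_of_le_one_left (norm_nonneg _) (norm_exp_neg_mul_le_one hs ht.le)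

theorem integrableOn_integrand (hφ : IntegrableOn φ (Ioi 0)) {s : ℝ} (hs : 0 ≤ s) :
    IntegrableOn (fun t => exp (-(s * t)) * φ t) (Ioi 0) :=
  hφ.bdd_mul (by fun_prop) <| (ae_restrict_iff' measurableSet_Ioi).2 <|
    ae_of_all _ fun _ ht => norm_exp_neg_mul_le_one hs (le_of_lt ht)

theorem continuousOn (hφ : IntegrableOn φ (Ioi 0)) :
    ContinuousOn (laplaceTransform φ) (Ici 0) :=
  continuousOn_of_dominated (fun _ hs => (integrableOn_integrand hφ hs).aestronglyMeasurable)
    (fun _ hs => (ae_restrict_iff' measurableSet_Ioi).2 <|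
      ae_of_all _ fun _ ht => norm_integrand_le hs ht)
    hφ.norm (ae_of_all _ fun _ => by fun_prop)

theorem antitoneOn (hφ : IntegrableOn φ (Ioi 0)) (hφ0 : ∀ t ∈ Ioi 0, 0 ≤ φ t) :
    AntitoneOn (laplaceTransform φ) (Ici 0) := fun s hs s' hs' hss' =>
  setIntegral_mono_on (integrableOn_integrand hφ hs') (integrableOn_integrand hφ hs)
    measurableSet_Ioi fun t ht =>
      mul_le_mul_of_nonneg_right (exp_le_exp.2 (by nlinarith [mem_Ioi.1 ht])) (hφ0 t ht)

theorem tendsto_atTop (hφ : IntegrableOn φ (Ioi 0)) :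
    Tendsto (laplaceTransform φ) atTop (𝓝 0) := by
  have hlim : ∀ t ∈ Ioi (0 : ℝ), Tendsto (fun s => exp (-(s * t)) * φ t) atTop (𝓝 0) := by
    intro t ht
    have : Tendsto (fun s => exp (-(s * t))) atTop (𝓝 0) :=
      tendsto_exp_atBot.comp <| tendsto_neg_atTop_atBot.comp <|
        tendsto_id.atTop_mul_const (mem_Ioi.1 ht)
    simpa using this.mul_const (φ t)
  have h := tendsto_integral_filter_of_dominated_convergence _
    (eventually_ge_atTop 0 |>.mono fun _ hs => (integrableOn_integrand hφ hs).aestronglyMeasurable)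
    (eventually_ge_atTop 0 |>.mono fun _ hs => (ae_restrict_iff' measurableSet_Ioi).2 <|
      ae_of_all _ fun _ ht => norm_integrand_le hs ht)
    hφ.norm ((ae_restrict_iff' measurableSet_Ioi).2 <| ae_of_all _ hlim)
  rwa [integral_zero] at h

end laplaceTransform

theorem exists_lt_eq_of_continuousOn_Ici_of_tendsto {α δ : Type*}
    [ConditionallyCompleteLinearOrder α] [TopologicalSpace α] [OrderTopology α]
    [DenselyOrdered α] [LinearOrder δ] [TopologicalSpace δ] [OrderTopology δ]
    {f : α → δ} {a : α} {b c : δ} (hf : ContinuousOn f (Ici a)) (hlim : Tendsto f atTop (𝓝 b))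
    (hbc : b < c) (hca : c < f a) : ∃ x, a < x ∧ f x = c := by
  obtain ⟨T, hfT, haT⟩ := ((hlim.eventually (gt_mem_nhds hbc)).and (eventually_ge_atTop a)).exists
  obtain ⟨x, hx, hfx⟩ := intermediate_value_Ioc' haT (hf.mono Icc_subset_Ici_self) ⟨hfT.le, hca⟩
  exact ⟨x, hx.1, hfx⟩

noncomputable def infectionAgeKernel (β w κ : ℝ → ℝ) (t : ℝ) : ℝ :=
  ∫ ξ in Ioi 0, β (ξ + t) * w ξ * exp (-∫ u in ξ..ξ + t, κ u)

section infectionAgeKernel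

variable {β w κ : ℝ → ℝ}

theorem integrableOn_infectionAgeKernel_integrand {c Bβ Bw : ℝ} (hβ : Measurable β)
    (hw : Measurable w) (hκ : ∀ a b, IntervalIntegrable κ volume a b) (hc : 0 < c)
    (hκc : ∀ x, c ≤ κ x) (hβB : ∀ x, ‖β x‖ ≤ Bβ)
    (hwB : ∀ x, 0 ≤ x → ‖w x‖ ≤ Bw * exp (-(c * x))) :
    IntegrableOn (fun p : ℝ × ℝ => β (p.1 + p.2) * w p.1 * exp (-∫ u in p.1..p.1 + p.2, κ u))
      (Ioi 0 ×ˢ Ioi 0) := by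
  have hsurv : Continuous fun p : ℝ × ℝ => exp (-∫ u in p.1..p.1 + p.2, κ u) :=
    ((continuous_intervalIntegral_fst_snd hκ).comp
      (continuous_fst.prodMk (continuous_fst.add continuous_snd))).neg.rexp
  refine integrableOn_Ioi_prod_Ioi_of_norm_le_exp (K := Bβ * Bw) hc
    (((hβ.comp measurable_add).mul (hw.comp measurable_fst)).aestronglyMeasurable.mul
      hsurv.aestronglyMeasurable) fun ξ t hξ ht => ?_
  have hB : 0 ≤ Bβ := (norm_nonneg _).trans (hβB 0)
  have hsurv_le : exp (-∫ u in ξ..ξ + t, κ u) ≤ exp (-(c * t)) := by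
    simpa using exp_neg_intervalIntegral_le_s6 (by linarith) (hκ ξ (ξ + t)) hκc
  calc ‖β (ξ + t) * w ξ * exp (-∫ u in ξ..ξ + t, κ u)‖
      = ‖β (ξ + t)‖ * ‖w ξ‖ * exp (-∫ u in ξ..ξ + t, κ u) := by
        rw [norm_mul, norm_mul, norm_of_nonneg (exp_pos _).le]
    _ ≤ Bβ * (Bw * exp (-(c * ξ))) * exp (-(c * t)) := by
        have hwξ := hwB ξ hξ.le
        exact mul_le_mul (mul_le_mul (hβB _) hwξ (norm_nonneg _) hB) hsurv_le (exp_pos _).le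
          (mul_nonneg hB ((norm_nonneg _).trans hwξ))
    _ = Bβ * Bw * exp (-(c * (ξ + t))) := by
        rw [mul_add, neg_add, exp_add]; ring

theorem integrableOn_infectionAgeKernel (hint : IntegrableOn
      (fun p : ℝ × ℝ => β (p.1 + p.2) * w p.1 * exp (-∫ u in p.1..p.1 + p.2, κ u))
      (Ioi 0 ×ˢ Ioi 0)) : IntegrableOn (infectionAgeKernel β w κ) (Ioi 0) := by
  rw [IntegrableOn, Measure.volume_eq_prod, ← Measure.prod_restrict] at hint
  exact hint.integral_prod_right

theorem integral_Ioi_mul_intervalIntegral_eq_laplaceTransform (hint : IntegrableOn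
      (fun p : ℝ × ℝ => β (p.1 + p.2) * w p.1 * exp (-∫ u in p.1..p.1 + p.2, κ u))
      (Ioi 0 ×ˢ Ioi 0))
    (hκ : ∀ a b, IntervalIntegrable κ volume a b) {lam : ℝ} (hlam : 0 ≤ lam) :
    ∫ a in Ioi 0, β a * ∫ s in 0..a, w s * exp (-∫ z in s..a, (κ z + lam)) =
      laplaceTransform (infectionAgeKernel β w κ) lam := by
  have hsplit : ∀ ξ t, β (ξ + t) * (w ξ * exp (-∫ z in ξ..ξ + t, (κ z + lam))) =
      exp (-(lam * t)) * (β (ξ + t) * w ξ * exp (-∫ u in ξ..ξ + t, κ u)) := fun ξ t => by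
    rw [intervalIntegral.integral_add (hκ _ _) intervalIntegrable_const,
      intervalIntegral.integral_const, smul_eq_mul, add_sub_cancel_left, mul_comm t, neg_add,
      exp_add]
    ring
  simp_rw [← intervalIntegral.integral_const_mul]
  rw [integral_Ioi_intervalIntegral_eq_integral_Ioi_integral_Ioi]
  · simp_rw [hsplit, integral_const_mul]
    rfl
  · simp_rw [hsplit]
    exact hint.bdd_mul (by fun_prop) <|
      (ae_restrict_iff' (measurableSet_Ioi.prod measurableSet_Ioi)).2 <|
        ae_of_all _ fun p hp => norm_exp_neg_mul_le_one hlam (le_of_lt hp.2)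

end infectionAgeKernel

theorem characteristic_function_real_properties_general
    (Λh Λv μv μ0 : ℝ)
    (μh δ r1 βh βv : ℝ → ℝ)
    (hΛh : 0 < Λh) (hΛv : 0 < Λv) (hμv : 0 < μv) (hμ0 : 0 < μ0)
    (hμhm : Measurable μh) (hδm : Measurable δ) (hr1m : Measurable r1)
    (hβhm : Measurable βh) (hβvm : Measurable βv)
    (hμh_lb : ∀ a, μ0 ≤ μh a)
    (hδ0 : ∀ a, 0 ≤ δ a) (hr10 : ∀ a, 0 ≤ r1 a)
    (hβh0 : ∀ a, 0 ≤ βh a) (hβv0 : ∀ a, 0 ≤ βv a)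
    (Bμh Bδ Br1 Bβh Bβv : ℝ)
    (hμhB : ∀ a, μh a ≤ Bμh) (hδB : ∀ a, δ a ≤ Bδ) (hr1B : ∀ a, r1 a ≤ Br1)
    (hβhB : ∀ a, βh a ≤ Bβh) (hβvB : ∀ a, βv a ≤ Bβv)
    (sh0 : ℝ → ℝ) (hsh0 : ∀ a, sh0 a = Λh * exp (-(∫ u in (0:ℝ)..a, μh u)))
    (Sv0 : ℝ) (hSv0def : Sv0 = Λv / μv)
    (R0 : ℝ)
    (hR0 : R0 = Real.sqrt ((Sv0 / μv) * ∫ s in Ioi (0:ℝ), ∫ ξ in Ioi (0:ℝ),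
      βh (ξ+s) * βv ξ * sh0 ξ * exp (-(∫ u in ξ..(ξ+s), (μh u + r1 u + δ u)))))
    (g : ℝ → ℝ)
    (hg : ∀ lam, g lam = (Sv0 / μv) * ∫ a in Ioi (0:ℝ), βh a *
      ∫ s in (0:ℝ)..a, βv s * sh0 s * exp (-(∫ z in s..a, (μh z + δ z + r1 z + lam)))) :
    ContinuousOn g (Ici 0) ∧
    AntitoneOn g (Ici 0) ∧
    g 0 = R0 ^ 2 ∧
    Filter.Tendsto g Filter.atTop (nhds 0) ∧
    (1 < R0 → ∃ lam : ℝ, 0 < lam ∧ g lam = 1) := by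
  set κ : ℝ → ℝ := fun z => μh z + δ z + r1 z with hκ
  have hκc : ∀ a, μ0 ≤ κ a := fun a => by linarith [hμh_lb a, hδ0 a, hr10 a]
  have hμhI : ∀ a b, IntervalIntegrable μh volume a b :=
    intervalIntegrable_of_norm_le hμhm.aestronglyMeasurable fun x =>
      (norm_of_nonneg (hμ0.le.trans (hμh_lb x))).trans_le (hμhB x)
  have hκI : ∀ a b, IntervalIntegrable κ volume a b :=
    intervalIntegrable_of_norm_le (hμhm.add hδm |>.add hr1m).aestronglyMeasurable fun x =>
      (norm_of_nonneg (hμ0.le.trans (hκc x))).trans_le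
        (by linarith [hμhB x, hδB x, hr1B x] : κ x ≤ Bμh + Bδ + Br1)
  have hsh0_nonneg : ∀ a, 0 ≤ sh0 a := fun a => by rw [hsh0]; positivity
  have hsh0c : Continuous sh0 := by
    rw [funext hsh0]
    exact continuous_const.mul (intervalIntegral.continuous_primitive hμhI 0).neg.rexp
  have hint := integrableOn_infectionAgeKernel_integrand (w := fun s => βv s * sh0 s)
    (Bw := Bβv * Λh) hβhm (hβvm.mul hsh0c.measurable) hκI hμ0 hκc
    (fun x => (norm_of_nonneg (hβh0 x)).trans_le (hβhB x)) fun x hx => by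
      rw [hsh0]
      exact norm_mul_mul_exp_neg_integral_le hΛh.le
        (fun x => (norm_of_nonneg (hβv0 x)).trans_le (hβvB x)) (hμhI 0 x) hμh_lb hx
  set φ := fun t => Sv0 / μv * infectionAgeKernel βh (fun s => βv s * sh0 s) κ t
  have hC : 0 ≤ Sv0 / μv := by rw [hSv0def]; positivity
  have hφ : IntegrableOn φ (Ioi 0) := (integrableOn_infectionAgeKernel hint).const_mul _
  have hφ0 : ∀ t ∈ Ioi (0 : ℝ), 0 ≤ φ t := fun t _ => mul_nonneg hC <| integral_nonneg fun ξ =>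
    mul_nonneg (mul_nonneg (hβh0 _) (mul_nonneg (hβv0 _) (hsh0_nonneg _))) (exp_pos _).le
  have hgφ : EqOn g (laplaceTransform φ) (Ici 0) := fun lam hlam => by
    rw [hg, laplaceTransform.const_mul,
      ← integral_Ioi_mul_intervalIntegral_eq_laplaceTransform hint hκI hlam]
  have hg0 : g 0 = R0 ^ 2 := by
    have hR0φ : R0 = sqrt (∫ t in Ioi 0, φ t) := by
      rw [hR0, integral_const_mul]
      simp only [infectionAgeKernel, hκ, mul_assoc, add_right_comm _ (δ _)]
    rw [hgφ self_mem_Ici, laplaceTransform.zero_eq, hR0φ,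
      sq_sqrt (setIntegral_nonneg measurableSet_Ioi hφ0)]
  have hcont : ContinuousOn g (Ici 0) := (laplaceTransform.continuousOn hφ).congr hgφ
  have htend : Tendsto g atTop (𝓝 0) := (laplaceTransform.tendsto_atTop hφ).congr' <|
    eventuallyEq_of_mem (Ici_mem_atTop 0) fun _ hx => (hgφ hx).symm
  exact ⟨hcont, (laplaceTransform.antitoneOn hφ hφ0).congr hgφ.symm, hg0, htend, fun hR =>
    exists_lt_eq_of_continuousOn_Ici_of_tendsto hcont htend one_pos (by nlinarith)⟩

/-- Properties of the (real) characteristic function of the linearization of the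
age-structured SIRS/SI malaria model at the parasite-free equilibrium: it is
continuous, decreasing, equals `R₀²` at `0`, vanishes at infinity, and if `R₀ > 1`
it takes the value `1` at some positive `λ`. -/
theorem characteristic_function_real_properties
    (Λh Λv μv μ0 : ℝ)
    (μh δ r1 r2 βh βv : ℝ → ℝ)
    (hΛh : 0 < Λh) (hΛv : 0 < Λv) (hμv : 0 < μv) (hμ0 : 0 < μ0)
    (hμhm : Measurable μh) (hδm : Measurable δ) (hr1m : Measurable r1)
    (hr2m : Measurable r2) (hβhm : Measurable βh) (hβvm : Measurable βv)
    (hμh_lb : ∀ a, μ0 ≤ μh a) (hμv_lb : μ0 ≤ μv)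
    (hδ0 : ∀ a, 0 ≤ δ a) (hr10 : ∀ a, 0 ≤ r1 a) (hr20 : ∀ a, 0 ≤ r2 a)
    (hβh0 : ∀ a, 0 ≤ βh a) (hβv0 : ∀ a, 0 ≤ βv a)
    (Bμh Bδ Br1 Br2 Bβh Bβv : ℝ)
    (hμhB : ∀ a, μh a ≤ Bμh) (hδB : ∀ a, δ a ≤ Bδ) (hr1B : ∀ a, r1 a ≤ Br1)
    (hr2B : ∀ a, r2 a ≤ Br2) (hβhB : ∀ a, βh a ≤ Bβh) (hβvB : ∀ a, βv a ≤ Bβv)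
    (sh0 : ℝ → ℝ) (hsh0 : ∀ a, sh0 a = Λh * exp (-(∫ u in (0:ℝ)..a, μh u)))
    (Sv0 : ℝ) (hSv0def : Sv0 = Λv / μv)
    (R0 : ℝ)
    (hR0 : R0 = Real.sqrt ((Sv0 / μv) * ∫ s in Ioi (0:ℝ), ∫ ξ in Ioi (0:ℝ),
      βh (ξ+s) * βv ξ * sh0 ξ * exp (-(∫ u in ξ..(ξ+s), (μh u + r1 u + δ u)))))
    (g : ℝ → ℝ)
    (hg : ∀ lam, g lam = (Sv0 / μv) * ∫ a in Ioi (0:ℝ), βh a *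
      ∫ s in (0:ℝ)..a, βv s * sh0 s * exp (-(∫ z in s..a, (μh z + δ z + r1 z + lam)))) :
    ContinuousOn g (Ici 0) ∧
    AntitoneOn g (Ici 0) ∧
    g 0 = R0 ^ 2 ∧
    Filter.Tendsto g Filter.atTop (nhds 0) ∧
    (1 < R0 → ∃ lam : ℝ, 0 < lam ∧ g lam = 1) :=
  characteristic_function_real_properties_general Λh Λv μv μ0 μh δ r1 βh βv hΛh hΛv hμv hμ0 hμhm hδm
    hr1m hβhm hβvm hμh_lb hδ0 hr10 hβh0 hβv0 Bμh Bδ Br1 Bβh Bβv hμhB hδB hr1B hβhB hβvB sh0 hsh0 Sv0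
    hSv0def R0 hR0 g hg
end

section
/- Let (s_h, i_h, r_h, S_v, I_v) be a classical solution of the age-structured SIRS/SI malaria model on ℝ₊ × ℝ₊, with s_h, i_h ≥ 0, S_v(t) > 0 and I_v(t) ≥ 0 for all t, i_h(t,0) = 0 for all t, i_h(t,·) and ∂_a i_h(t,·) integrable on (0,∞) for each t with ψ(a)·i_h(t,a) → 0 as a → ∞, and such that differentiation under the integral sign in t is justified. Define L_0(t) = ∫_0^∞ ψ(a)·i_h(t,a) da + g(S_v(t)/S_v^0) + I_v(t)/S_v^0 where g(x) = x - ln(x) - 1 and ψ(a) = ∫_a^∞ β_h(s)·exp(-∫_a^s (μ_h(z)+δ(z)+r_1(z))dz) ds. Then for every t > 0, d/dt L_0(t) = (μ_v·I_v(t)/S_v^0)·( (S_v^0/μ_v)·∫_0^∞ β_v(a)·ψ(a)·s_h(t,a) da − 1 ) − (μ_v·S_v(t)/S_v^0)·(1 − S_v^0/S_v(t))². -/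
/-!
With `q = μ_h + δ + r_1`, the weight `ψ(a) = e^{∫₀ᵃ q} ∫ₐ^∞ β_h(s) e^{-∫₀ˢ q} ds` is a product of
an exponential of a primitive and a tail integral, hence absolutely continuous with
`ψ' = q ψ - β_h` almost everywhere (pointwise derivatives need not exist, `β_h` being merely
measurable). Integrating `(ψ i_h)'` over `(0, ∞)`, using `i_h(t, 0) = 0` and `ψ i_h → 0`, gives the
renewal identity `∫ ψ (q i_h + ∂_a i_h) = ∫ β_h i_h`. Substituting the PDE for `i_h`, the time
derivative of `∫ ψ i_h` is therefore `I_v ∫ β_v ψ s_h - ∫ β_h i_h`; the last term cancels against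
the vector equations in the derivative of `g(S_v / S_v⁰) + I_v / S_v⁰`, and `Λ_v = μ_v S_v⁰` turns
what remains into the stated form.
-/

open MeasureTheory Real Set Filter Topology

theorem LocallyLipschitz.comp_absolutelyContinuousOnInterval {X Y : Type*}
    [SeminormedAddCommGroup X] [PseudoMetricSpace Y] {φ : X → Y} {f : ℝ → X} {a b : ℝ}
    (hφ : LocallyLipschitz φ) (hf : AbsolutelyContinuousOnInterval f a b) :
    AbsolutelyContinuousOnInterval (φ ∘ f) a b := by
  obtain ⟨K, hK⟩ := (hφ.locallyLipschitzOn (s := f '' uIcc a b)).exists_lipschitzOnWith_of_compact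
    (isCompact_uIcc.image_of_continuousOn hf.continuousOn)
  unfold AbsolutelyContinuousOnInterval at hf ⊢
  apply squeeze_zero' ?_ ?_ (by simpa using hf.const_mul (K : ℝ))
  · exact Eventually.of_forall fun _ ↦ Finset.sum_nonneg fun _ _ ↦ dist_nonneg
  rw [eventually_inf_principal]
  filter_upwards with E hE
  rw [Finset.mul_sum]
  gcongr with i hi
  exact hK.dist_le_mul _ (mem_image_of_mem f (hE.1 i hi).1) _ (mem_image_of_mem f (hE.1 i hi).2)

theorem absolutelyContinuousOnInterval_const {X : Type*} [PseudoMetricSpace X] (c : X) (a b : ℝ) :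
    AbsolutelyContinuousOnInterval (fun _ ↦ c) a b :=
  (LipschitzWith.const c).lipschitzOnWith.absolutelyContinuousOnInterval

theorem AbsolutelyContinuousOnInterval.congr {X : Type*} [PseudoMetricSpace X] {f g : ℝ → X}
    {a b : ℝ} (hf : AbsolutelyContinuousOnInterval f a b) (hfg : EqOn f g (uIcc a b)) :
    AbsolutelyContinuousOnInterval g a b := by
  unfold AbsolutelyContinuousOnInterval at hf ⊢
  refine hf.congr' ?_
  rw [EventuallyEq, eventually_inf_principal]
  filter_upwards with E hE
  exact Finset.sum_congr rfl fun i hi ↦ by rw [hfg (hE.1 i hi).1, hfg (hE.1 i hi).2]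

theorem absolutelyContinuousOnInterval_of_hasDerivAt {f f' : ℝ → ℝ} {a b : ℝ}
    (hf : ∀ x ∈ uIcc a b, HasDerivAt f (f' x) x) (hf' : IntervalIntegrable f' volume a b) :
    AbsolutelyContinuousOnInterval f a b := by
  refine ((absolutelyContinuousOnInterval_const (f a) a b).add
    (hf'.absolutelyContinuousOnInterval_intervalIntegral left_mem_uIcc)).congr fun y hy ↦ ?_
  have hsub : uIcc a y ⊆ uIcc a b := uIcc_subset_uIcc_left hy
  simp only [Pi.add_apply, intervalIntegral.integral_eq_sub_of_hasDerivAt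
    (fun x hx ↦ hf x (hsub hx)) (hf'.mono_set hsub), add_sub_cancel]

theorem integral_Ioi_deriv_mul_add_mul_deriv {f g : ℝ → ℝ} {a m : ℝ}
    (hf : ∀ b, a ≤ b → AbsolutelyContinuousOnInterval f a b)
    (hg : ∀ b, a ≤ b → AbsolutelyContinuousOnInterval g a b)
    (hint : IntegrableOn (fun x ↦ deriv f x * g x + f x * deriv g x) (Ioi a))
    (hlim : Tendsto (fun x ↦ f x * g x) atTop (𝓝 m)) :
    ∫ x in Ioi a, deriv f x * g x + f x * deriv g x = m - f a * g a := by
  refine tendsto_nhds_unique (intervalIntegral_tendsto_integral_Ioi a hint tendsto_id) ?_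
  refine (hlim.sub_const _).congr' ?_
  filter_upwards [eventually_ge_atTop a] with b hb
  exact ((hf b hb).integral_deriv_mul_eq_sub (hg b hb)).symm

theorem MeasureTheory.LocallyIntegrable.intervalIntegrable {E : Type*} [NormedAddCommGroup E]
    {f : ℝ → E} (hf : LocallyIntegrable f) (a b : ℝ) : IntervalIntegrable f volume a b :=
  (hf.integrableOn_isCompact isCompact_uIcc).intervalIntegrable

theorem locallyIntegrable_of_forall_integrableOn_Ioi {E : Type*} [NormedAddCommGroup E]
    {f : ℝ → E} (hf : ∀ a, IntegrableOn f (Ioi a)) : LocallyIntegrable f :=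
  fun x ↦ ⟨Ioi (x - 1), Ioi_mem_nhds (by linarith), hf _⟩

theorem MeasureTheory.LocallyIntegrable.absolutelyContinuousOnInterval_intervalIntegral
    {f : ℝ → ℝ} (hf : LocallyIntegrable f) (c a b : ℝ) :
    AbsolutelyContinuousOnInterval (fun x ↦ ∫ z in c..x, f z) a b := by
  have hsplit : (fun x ↦ ∫ z in c..x, f z) = fun x ↦ (∫ z in c..a, f z) + ∫ z in a..x, f z :=
    funext fun x ↦ (intervalIntegral.integral_add_adjacent_intervals (hf.intervalIntegrable c a)
      (hf.intervalIntegrable a x)).symm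
  rw [hsplit]
  exact (absolutelyContinuousOnInterval_const _ a b).add
    ((hf.intervalIntegrable a b).absolutelyContinuousOnInterval_intervalIntegral left_mem_uIcc)

noncomputable def residualInfectivity (q β : ℝ → ℝ) (a : ℝ) : ℝ :=
  ∫ s in Ioi a, β s * exp (-∫ z in a..s, q z)

section residualInfectivity

variable {q β : ℝ → ℝ} {μ0 Bβ : ℝ}

theorem mul_sub_le_integral_of_le {a s : ℝ} (hq : IntervalIntegrable q volume a s)
    (hq_lb : ∀ x, μ0 ≤ q x) (has : a ≤ s) : μ0 * (s - a) ≤ ∫ z in a..s, q z := by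
  calc μ0 * (s - a) = ∫ _ in a..s, μ0 := by simp [mul_comm]
    _ ≤ ∫ z in a..s, q z :=
      intervalIntegral.integral_mono_on has intervalIntegrable_const hq fun x _ ↦ hq_lb x

theorem residualInfectivity_integrand_le {a s : ℝ} (hq : IntervalIntegrable q volume a s)
    (hq_lb : ∀ x, μ0 ≤ q x) (hβ0 : ∀ x, 0 ≤ β x) (hβB : ∀ x, β x ≤ Bβ) (has : a ≤ s) :
    β s * exp (-∫ z in a..s, q z) ≤ Bβ * exp (μ0 * a) * exp (-μ0 * s) := by
  have hq_int := mul_sub_le_integral_of_le hq hq_lb has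
  calc β s * exp (-∫ z in a..s, q z) ≤ Bβ * exp (-(μ0 * (s - a))) := by
        gcongr
        exacts [(hβ0 s).trans (hβB s), hβB s]
    _ = Bβ * exp (μ0 * a) * exp (-μ0 * s) := by rw [mul_assoc, ← exp_add]; ring_nf

theorem integrableOn_residualInfectivity_integrand (hq : LocallyIntegrable q) (hμ0 : 0 < μ0)
    (hq_lb : ∀ x, μ0 ≤ q x) (hβm : Measurable β) (hβ0 : ∀ x, 0 ≤ β x) (hβB : ∀ x, β x ≤ Bβ)
    (a : ℝ) : IntegrableOn (fun s ↦ β s * exp (-∫ z in a..s, q z)) (Ioi a) := by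
  have hcont : Continuous fun s ↦ exp (-∫ z in a..s, q z) :=
    (intervalIntegral.continuous_primitive hq.intervalIntegrable a).neg.rexp
  refine Integrable.mono' ((integrableOn_exp_mul_Ioi (neg_lt_zero.2 hμ0) a).const_mul
    (Bβ * exp (μ0 * a))) (hβm.mul hcont.measurable).aestronglyMeasurable ?_
  filter_upwards [ae_restrict_mem measurableSet_Ioi] with s hs
  rw [norm_of_nonneg (mul_nonneg (hβ0 s) (exp_pos _).le)]
  exact residualInfectivity_integrand_le (hq.intervalIntegrable a s) hq_lb hβ0 hβB hs.le

theorem residualInfectivity_nonneg (hβ0 : ∀ x, 0 ≤ β x) (a : ℝ) :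
    0 ≤ residualInfectivity q β a :=
  setIntegral_nonneg measurableSet_Ioi fun s _ ↦ mul_nonneg (hβ0 s) (exp_pos _).le

theorem residualInfectivity_le (hq : LocallyIntegrable q) (hμ0 : 0 < μ0)
    (hq_lb : ∀ x, μ0 ≤ q x) (hβm : Measurable β) (hβ0 : ∀ x, 0 ≤ β x) (hβB : ∀ x, β x ≤ Bβ)
    (a : ℝ) : residualInfectivity q β a ≤ Bβ / μ0 := by
  have hexp := integrableOn_exp_mul_Ioi (neg_lt_zero.2 hμ0) a
  calc residualInfectivity q β a ≤ ∫ s in Ioi a, Bβ * exp (μ0 * a) * exp (-μ0 * s) :=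
        setIntegral_mono_on (integrableOn_residualInfectivity_integrand hq hμ0 hq_lb hβm hβ0 hβB a)
          (hexp.const_mul _) measurableSet_Ioi fun s hs ↦
            residualInfectivity_integrand_le (hq.intervalIntegrable a s) hq_lb hβ0 hβB hs.le
    _ = Bβ / μ0 := by
      rw [integral_const_mul, integral_exp_mul_Ioi (neg_lt_zero.2 hμ0), neg_div_neg_eq,
        ← mul_div_assoc, mul_assoc, ← exp_add]
      simp

noncomputable def weightedInfectivity (q β : ℝ → ℝ) (s : ℝ) : ℝ :=
  β s * exp (-∫ z in 0..s, q z)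

theorem weightedInfectivity_eq_mul (hq : LocallyIntegrable q) (a s : ℝ) :
    weightedInfectivity q β s = exp (-∫ z in 0..a, q z) * (β s * exp (-∫ z in a..s, q z)) := by
  rw [weightedInfectivity, ← intervalIntegral.integral_add_adjacent_intervals
    (hq.intervalIntegrable 0 a) (hq.intervalIntegrable a s), neg_add, exp_add]
  ring

theorem integrableOn_weightedInfectivity (hq : LocallyIntegrable q) (hμ0 : 0 < μ0)
    (hq_lb : ∀ x, μ0 ≤ q x) (hβm : Measurable β) (hβ0 : ∀ x, 0 ≤ β x) (hβB : ∀ x, β x ≤ Bβ)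
    (a : ℝ) : IntegrableOn (weightedInfectivity q β) (Ioi a) := by
  refine IntegrableOn.congr_fun ((integrableOn_residualInfectivity_integrand hq hμ0 hq_lb hβm hβ0
    hβB a).const_mul (exp (-∫ z in 0..a, q z))) (fun s _ ↦ ?_) measurableSet_Ioi
  exact (weightedInfectivity_eq_mul hq a s).symm

theorem residualInfectivity_eq (hq : LocallyIntegrable q)
    (hβ : ∀ a, IntegrableOn (weightedInfectivity q β) (Ioi a)) :
    residualInfectivity q β = fun a ↦ exp (∫ z in 0..a, q z) *
      ((∫ s in Ioi 0, weightedInfectivity q β s) - ∫ s in 0..a, weightedInfectivity q β s) := by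
  ext a
  rw [← intervalIntegral.integral_Ioi_sub_Ioi' (hβ 0) (hβ a), sub_sub_cancel, residualInfectivity,
    ← integral_const_mul]
  refine setIntegral_congr_fun measurableSet_Ioi fun s _ ↦ ?_
  rw [weightedInfectivity_eq_mul hq a, ← mul_assoc, ← exp_add, add_neg_cancel, exp_zero, one_mul]

theorem continuous_residualInfectivity (hq : LocallyIntegrable q)
    (hβ : ∀ a, IntegrableOn (weightedInfectivity q β) (Ioi a)) :
    Continuous (residualInfectivity q β) := by
  rw [residualInfectivity_eq hq hβ]
  exact (intervalIntegral.continuous_primitive hq.intervalIntegrable 0).rexp.mul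
    (continuous_const.sub (intervalIntegral.continuous_primitive
      (locallyIntegrable_of_forall_integrableOn_Ioi hβ).intervalIntegrable 0))

theorem absolutelyContinuousOnInterval_residualInfectivity (hq : LocallyIntegrable q)
    (hβ : ∀ a, IntegrableOn (weightedInfectivity q β) (Ioi a)) (a b : ℝ) :
    AbsolutelyContinuousOnInterval (residualInfectivity q β) a b := by
  have hW := LocallyIntegrable.absolutelyContinuousOnInterval_intervalIntegral
    (locallyIntegrable_of_forall_integrableOn_Ioi hβ) 0 a b
  rw [residualInfectivity_eq hq hβ]
  exact (contDiff_exp.locallyLipschitz.comp_absolutelyContinuousOnInterval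
    (hq.absolutelyContinuousOnInterval_intervalIntegral 0 a b)).mul
    ((absolutelyContinuousOnInterval_const _ a b).sub hW)

theorem ae_hasDerivAt_residualInfectivity (hq : LocallyIntegrable q)
    (hβ : ∀ a, IntegrableOn (weightedInfectivity q β) (Ioi a)) :
    ∀ᵐ x, HasDerivAt (residualInfectivity q β) (q x * residualInfectivity q β x - β x) x := by
  filter_upwards [LocallyIntegrable.ae_hasDerivAt_integral hq,
    LocallyIntegrable.ae_hasDerivAt_integral (locallyIntegrable_of_forall_integrableOn_Ioi hβ)]
    with x hqx hβx
  rw [residualInfectivity_eq hq hβ]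
  refine ((hqx 0).exp.mul
    ((hβx 0).const_sub (∫ s in Ioi 0, weightedInfectivity q β s))).congr_deriv ?_
  have hexp : exp (∫ z in 0..x, q z) * exp (-∫ z in 0..x, q z) = 1 := by
    rw [← exp_add, add_neg_cancel, exp_zero]
  simp only [weightedInfectivity]
  linear_combination (-β x) * hexp

theorem integrableOn_residualInfectivity_mul (hq : LocallyIntegrable q) (hμ0 : 0 < μ0)
    (hq_lb : ∀ x, μ0 ≤ q x) (hβm : Measurable β) (hβ0 : ∀ x, 0 ≤ β x) (hβB : ∀ x, β x ≤ Bβ)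
    {G : ℝ → ℝ} {s : Set ℝ} (hG : IntegrableOn G s) :
    IntegrableOn (fun x ↦ residualInfectivity q β x * G x) s := by
  have hβ := integrableOn_weightedInfectivity hq hμ0 hq_lb hβm hβ0 hβB
  refine hG.bdd_mul (c := Bβ / μ0) (continuous_residualInfectivity hq hβ).aestronglyMeasurable
    (ae_of_all _ fun x ↦ ?_)
  rw [norm_of_nonneg (residualInfectivity_nonneg hβ0 x)]
  exact residualInfectivity_le hq hμ0 hq_lb hβm hβ0 hβB x

theorem integrableOn_residualInfectivity_mul_add {Bq : ℝ} (hq : LocallyIntegrable q)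
    (hμ0 : 0 < μ0) (hq_lb : ∀ x, μ0 ≤ q x) (hqB : ∀ x, q x ≤ Bq) (hβm : Measurable β)
    (hβ0 : ∀ x, 0 ≤ β x) (hβB : ∀ x, β x ≤ Bβ) {f f' : ℝ → ℝ} {s : Set ℝ}
    (hf : IntegrableOn f s) (hf' : IntegrableOn f' s) :
    IntegrableOn (fun x ↦ residualInfectivity q β x * (q x * f x + f' x)) s := by
  refine integrableOn_residualInfectivity_mul hq hμ0 hq_lb hβm hβ0 hβB (Integrable.add ?_ hf')
  exact hf.bdd_mul hq.aestronglyMeasurable.restrict (ae_of_all _ fun x ↦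
    (norm_of_nonneg (hμ0.le.trans (hq_lb x))).trans_le (hqB x))

/-- The equation `-ψ' + q ψ = β` for `ψ = residualInfectivity q β`, tested against `f`. -/
theorem integral_residualInfectivity_mul_add_deriv {Bq : ℝ} (hq : LocallyIntegrable q)
    (hμ0 : 0 < μ0) (hq_lb : ∀ x, μ0 ≤ q x) (hqB : ∀ x, q x ≤ Bq) (hβm : Measurable β)
    (hβ0 : ∀ x, 0 ≤ β x) (hβB : ∀ x, β x ≤ Bβ) {f f' : ℝ → ℝ} (hf : ∀ x, HasDerivAt f (f' x) x)
    (hf_int : IntegrableOn f (Ioi 0)) (hf' : IntegrableOn f' (Ioi 0)) (hf0 : f 0 = 0)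
    (hlim : Tendsto (fun x ↦ residualInfectivity q β x * f x) atTop (𝓝 0)) :
    ∫ x in Ioi 0, residualInfectivity q β x * (q x * f x + f' x) = ∫ x in Ioi 0, β x * f x := by
  have hβ := integrableOn_weightedInfectivity hq hμ0 hq_lb hβm hβ0 hβB
  have hψf := integrableOn_residualInfectivity_mul_add hq hμ0 hq_lb hqB hβm hβ0 hβB hf_int hf'
  have hβf : IntegrableOn (fun x ↦ β x * f x) (Ioi 0) :=
    hf_int.bdd_mul hβm.aestronglyMeasurable (ae_of_all _ fun x ↦
      (norm_of_nonneg (hβ0 x)).trans_le (hβB x))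
  have hderiv : (fun x ↦ deriv (residualInfectivity q β) x * f x
      + residualInfectivity q β x * deriv f x) =ᵐ[volume.restrict (Ioi 0)]
      fun x ↦ residualInfectivity q β x * (q x * f x + f' x) - β x * f x := by
    refine ae_restrict_of_ae ?_
    filter_upwards [ae_hasDerivAt_residualInfectivity hq hβ] with x hx
    rw [hx.deriv, (hf x).deriv]
    ring
  have hfAC (b : ℝ) (hb : 0 ≤ b) : AbsolutelyContinuousOnInterval f 0 b :=
    absolutelyContinuousOnInterval_of_hasDerivAt (fun x _ ↦ hf x) <|
      (intervalIntegrable_iff_integrableOn_Ioc_of_le hb).2 (hf'.mono_set Ioc_subset_Ioi_self)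
  rw [← sub_eq_zero, ← integral_sub hψf hβf, ← integral_congr_ae hderiv,
    integral_Ioi_deriv_mul_add_mul_deriv
      (fun b _ ↦ absolutelyContinuousOnInterval_residualInfectivity hq hβ 0 b) hfAC
      ((hψf.sub hβf).congr_fun_ae hderiv.symm) hlim, hf0, mul_zero, sub_zero]

theorem integral_residualInfectivity_mul_of_transport {Bq : ℝ} (hq : LocallyIntegrable q)
    (hμ0 : 0 < μ0) (hq_lb : ∀ x, μ0 ≤ q x) (hqB : ∀ x, q x ≤ Bq) (hβm : Measurable β)
    (hβ0 : ∀ x, 0 ≤ β x) (hβB : ∀ x, β x ≤ Bβ) {f f' g F : ℝ → ℝ}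
    (hf : ∀ x, HasDerivAt f (f' x) x) (hf_int : IntegrableOn f (Ioi 0))
    (hf' : IntegrableOn f' (Ioi 0)) (hf0 : f 0 = 0)
    (hlim : Tendsto (fun x ↦ residualInfectivity q β x * f x) atTop (𝓝 0))
    (hF : IntegrableOn F (Ioi 0)) (hg : ∀ x, g x + f' x = F x - q x * f x) :
    ∫ x in Ioi 0, residualInfectivity q β x * g x
      = (∫ x in Ioi 0, residualInfectivity q β x * F x) - ∫ x in Ioi 0, β x * f x := by
  calc ∫ x in Ioi 0, residualInfectivity q β x * g x
      = ∫ x in Ioi 0, (residualInfectivity q β x * F x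
          - residualInfectivity q β x * (q x * f x + f' x)) :=
        setIntegral_congr_fun measurableSet_Ioi fun x _ ↦ by
          linear_combination residualInfectivity q β x * hg x
    _ = _ := by
      rw [integral_sub (integrableOn_residualInfectivity_mul hq hμ0 hq_lb hβm hβ0 hβB hF)
        (integrableOn_residualInfectivity_mul_add hq hμ0 hq_lb hqB hβm hβ0 hβB hf_int hf'),
        integral_residualInfectivity_mul_add_deriv hq hμ0 hq_lb hqB hβm hβ0 hβB hf hf_int hf' hf0
          hlim]

end residualInfectivity

theorem HasDerivAt.div_sub_log_div_sub_one {x : ℝ → ℝ} {x' c t : ℝ} (hx : HasDerivAt x x' t)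
    (hxt : x t ≠ 0) (hc : c ≠ 0) :
    HasDerivAt (fun τ ↦ x τ / c - Real.log (x τ / c) - 1) ((1 - c / x t) * x' / c) t := by
  refine (((hx.div_const c).sub ((hx.div_const c).log (div_ne_zero hxt hc))).sub_const
    1).congr_deriv ?_
  field_simp

theorem lyapunov_derivative_identity_general
    (Λv μv μ0 : ℝ)
    (μh δ r1 βh βv : ℝ → ℝ)
    (hΛv : 0 < Λv) (hμv : 0 < μv) (hμ0 : 0 < μ0)
    (hμhm : Measurable μh) (hδm : Measurable δ) (hr1m : Measurable r1)
    (hβhm : Measurable βh) (hβvm : Measurable βv)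
    (hμh_lb : ∀ a, μ0 ≤ μh a)
    (hδ0 : ∀ a, 0 ≤ δ a) (hr10 : ∀ a, 0 ≤ r1 a)
    (hβh0 : ∀ a, 0 ≤ βh a) (hβv0 : ∀ a, 0 ≤ βv a)
    (Bμh Bδ Br1 Bβh Bβv : ℝ)
    (hμhB : ∀ a, μh a ≤ Bμh) (hδB : ∀ a, δ a ≤ Bδ) (hr1B : ∀ a, r1 a ≤ Br1)
    (hβhB : ∀ a, βh a ≤ Bβh) (hβvB : ∀ a, βv a ≤ Bβv)
    (Sv0 : ℝ) (hSv0def : Sv0 = Λv / μv)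
    (ψ : ℝ → ℝ)
    (hψ : ∀ a, ψ a = ∫ s in Ioi a, βh s * exp (-(∫ z in a..s, (μh z + δ z + r1 z))))
    -- the solution
    (sh ih : ℝ → ℝ → ℝ) (Sv Iv : ℝ → ℝ) (iht iha : ℝ → ℝ → ℝ)
    (hSv_pos : ∀ t, 0 < Sv t)
    (hbc : ∀ t, ih t 0 = 0)
    -- partial derivatives of i_h and the PDE for i_h
    (hih_a : ∀ t a, HasDerivAt (fun α => ih t α) (iha t a) a)
    (hPDE_i : ∀ t a, iht t a + iha t a
      = βv a * Iv t * sh t a - (μh a + δ a + r1 a) * ih t a)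
    -- vector ODEs
    (hSv : ∀ t, HasDerivAt Sv
      (Λv - Sv t * (∫ a in Ioi (0:ℝ), βh a * ih t a) - μv * Sv t) t)
    (hIv : ∀ t, HasDerivAt Iv
      (Sv t * (∫ a in Ioi (0:ℝ), βh a * ih t a) - μv * Iv t) t)
    -- integrability and decay
    (hsh_int : ∀ t, IntegrableOn (sh t) (Ioi 0))
    (hih_int : ∀ t, IntegrableOn (ih t) (Ioi 0))
    (hiha_int : ∀ t, IntegrableOn (iha t) (Ioi 0))
    (hdecay : ∀ t, Filter.Tendsto (fun a => ψ a * ih t a) Filter.atTop (nhds 0))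
    -- differentiation under the integral sign is justified
    (hdiff_int : ∀ t, HasDerivAt (fun τ => ∫ a in Ioi (0:ℝ), ψ a * ih τ a)
      (∫ a in Ioi (0:ℝ), ψ a * iht t a) t)
    -- the Lyapunov functional
    (L0 : ℝ → ℝ)
    (hL0 : ∀ t, L0 t = (∫ a in Ioi (0:ℝ), ψ a * ih t a)
      + (Sv t / Sv0 - Real.log (Sv t / Sv0) - 1) + Iv t / Sv0) :
    ∀ t, 0 < t → HasDerivAt L0
      ((μv * Iv t / Sv0) * ((Sv0 / μv) * (∫ a in Ioi (0:ℝ), βv a * ψ a * sh t a) - 1)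
        - (μv * Sv t / Sv0) * (1 - Sv0 / Sv t) ^ 2) t := by
  intro t _
  set q : ℝ → ℝ := fun z ↦ μh z + δ z + r1 z
  have hq_lb (x : ℝ) : μ0 ≤ q x := by linarith [hμh_lb x, hδ0 x, hr10 x]
  have hqB (x : ℝ) : q x ≤ Bμh + Bδ + Br1 := by linarith [hμhB x, hδB x, hr1B x]
  have hq : LocallyIntegrable q :=
    (memLp_top_of_bound ((hμhm.add hδm).add hr1m).aestronglyMeasurable _ (ae_of_all _ fun x ↦
      (norm_of_nonneg (hμ0.le.trans (hq_lb x))).trans_le (hqB x))).locallyIntegrable le_top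
  obtain rfl : ψ = residualInfectivity q βh := funext hψ
  have hsource : IntegrableOn (fun a ↦ βv a * Iv t * sh t a) (Ioi 0) :=
    (((hsh_int t).bdd_mul hβvm.aestronglyMeasurable (ae_of_all _ fun x ↦
      (norm_of_nonneg (hβv0 x)).trans_le (hβvB x))).const_mul (Iv t)).congr
      (ae_of_all _ fun x ↦ by ring)
  have hD : ∫ a in Ioi 0, residualInfectivity q βh a * iht t a
      = Iv t * (∫ a in Ioi 0, βv a * residualInfectivity q βh a * sh t a)
        - ∫ a in Ioi 0, βh a * ih t a := by
    rw [integral_residualInfectivity_mul_of_transport hq hμ0 hq_lb hqB hβhm hβh0 hβhB (hih_a t)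
      (hih_int t) (hiha_int t) (hbc t) (hdecay t) hsource (hPDE_i t), ← integral_const_mul]
    congr 1
    exact setIntegral_congr_fun measurableSet_Ioi fun a _ ↦ by ring
  have hSv0 : Sv0 ≠ 0 := by rw [hSv0def]; positivity
  have hderiv := ((hdiff_int t).add ((hSv t).div_sub_log_div_sub_one (hSv_pos t).ne' hSv0)).add
    ((hIv t).div_const Sv0)
  rw [show L0 = _ from funext hL0]
  refine hderiv.congr_deriv ?_
  rw [hD, hSv0def]
  have hSv_ne := (hSv_pos t).ne'
  field_simp
  ring

/-- The derivative of the Lyapunov functional `L₀` along a classical solution of the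
age-structured SIRS/SI malaria model. -/
theorem lyapunov_derivative_identity
    (Λh Λv μv μ0 : ℝ)
    (μh δ r1 r2 βh βv : ℝ → ℝ)
    (hΛh : 0 < Λh) (hΛv : 0 < Λv) (hμv : 0 < μv) (hμ0 : 0 < μ0)
    (hμhm : Measurable μh) (hδm : Measurable δ) (hr1m : Measurable r1)
    (hr2m : Measurable r2) (hβhm : Measurable βh) (hβvm : Measurable βv)
    (hμh_lb : ∀ a, μ0 ≤ μh a) (hμv_lb : μ0 ≤ μv)
    (hδ0 : ∀ a, 0 ≤ δ a) (hr10 : ∀ a, 0 ≤ r1 a) (hr20 : ∀ a, 0 ≤ r2 a)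
    (hβh0 : ∀ a, 0 ≤ βh a) (hβv0 : ∀ a, 0 ≤ βv a)
    (Bμh Bδ Br1 Br2 Bβh Bβv : ℝ)
    (hμhB : ∀ a, μh a ≤ Bμh) (hδB : ∀ a, δ a ≤ Bδ) (hr1B : ∀ a, r1 a ≤ Br1)
    (hr2B : ∀ a, r2 a ≤ Br2) (hβhB : ∀ a, βh a ≤ Bβh) (hβvB : ∀ a, βv a ≤ Bβv)
    (Sv0 : ℝ) (hSv0def : Sv0 = Λv / μv)
    (ψ : ℝ → ℝ)
    (hψ : ∀ a, ψ a = ∫ s in Ioi a, βh s * exp (-(∫ z in a..s, (μh z + δ z + r1 z))))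
    -- the solution
    (sh ih rh : ℝ → ℝ → ℝ) (Sv Iv : ℝ → ℝ) (iht iha : ℝ → ℝ → ℝ)
    (hsh_pos : ∀ t a, 0 ≤ sh t a) (hih_pos : ∀ t a, 0 ≤ ih t a)
    (hSv_pos : ∀ t, 0 < Sv t) (hIv_pos : ∀ t, 0 ≤ Iv t)
    (hbc : ∀ t, ih t 0 = 0)
    -- partial derivatives of i_h and the PDE for i_h
    (hih_t : ∀ t a, HasDerivAt (fun τ => ih τ a) (iht t a) t)
    (hih_a : ∀ t a, HasDerivAt (fun α => ih t α) (iha t a) a)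
    (hPDE_i : ∀ t a, iht t a + iha t a
      = βv a * Iv t * sh t a - (μh a + δ a + r1 a) * ih t a)
    -- PDEs for s_h and r_h (derivative along characteristics)
    (hPDE_s : ∀ t a, 0 < t → 0 < a → HasDerivAt (fun h => sh (t+h) (a+h))
      (-(βv a) * Iv t * sh t a - μh a * sh t a + r2 a * rh t a) 0)
    (hPDE_r : ∀ t a, 0 < t → 0 < a → HasDerivAt (fun h => rh (t+h) (a+h))
      (r1 a * ih t a - (r2 a + μh a) * rh t a) 0)
    (hbc_s : ∀ t, sh t 0 = Λh) (hbc_r : ∀ t, rh t 0 = 0)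
    -- vector ODEs
    (hSv : ∀ t, HasDerivAt Sv
      (Λv - Sv t * (∫ a in Ioi (0:ℝ), βh a * ih t a) - μv * Sv t) t)
    (hIv : ∀ t, HasDerivAt Iv
      (Sv t * (∫ a in Ioi (0:ℝ), βh a * ih t a) - μv * Iv t) t)
    -- integrability and decay
    (hsh_int : ∀ t, IntegrableOn (sh t) (Ioi 0))
    (hih_int : ∀ t, IntegrableOn (ih t) (Ioi 0))
    (hiha_int : ∀ t, IntegrableOn (iha t) (Ioi 0))
    (hdecay : ∀ t, Filter.Tendsto (fun a => ψ a * ih t a) Filter.atTop (nhds 0))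
    -- differentiation under the integral sign is justified
    (hdiff_int : ∀ t, HasDerivAt (fun τ => ∫ a in Ioi (0:ℝ), ψ a * ih τ a)
      (∫ a in Ioi (0:ℝ), ψ a * iht t a) t)
    -- the Lyapunov functional
    (L0 : ℝ → ℝ)
    (hL0 : ∀ t, L0 t = (∫ a in Ioi (0:ℝ), ψ a * ih t a)
      + (Sv t / Sv0 - Real.log (Sv t / Sv0) - 1) + Iv t / Sv0) :
    ∀ t, 0 < t → HasDerivAt L0
      ((μv * Iv t / Sv0) * ((Sv0 / μv) * (∫ a in Ioi (0:ℝ), βv a * ψ a * sh t a) - 1)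
        - (μv * Sv t / Sv0) * (1 - Sv0 / Sv t) ^ 2) t :=
  lyapunov_derivative_identity_general Λv μv μ0 μh δ r1 βh βv hΛv hμv hμ0 hμhm hδm hr1m hβhm hβvm
    hμh_lb hδ0 hr10 hβh0 hβv0 Bμh Bδ Br1 Bβh Bβv hμhB hδB hr1B hβhB hβvB Sv0 hSv0def ψ hψ sh ih Sv
    Iv iht iha hSv_pos hbc hih_a hPDE_i hSv hIv hsh_int hih_int hiha_int hdecay hdiff_int L0 hL0
end
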